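/- arXiv:1910.05590 — 2 statements merged into one kernel-verified Lean document; each statement's English description precedes it below -/
import Mathlib

section
/- Let $0<\beta<d$ and let $f\in W^{1,1}_{\mathrm{pol}}(\mathbb{S}^d)$ be nonnegative, not identically zero, and continuous on $\mathbb{S}^d\setminus\{\mathbf{e},-\mathbf{e}\}$. Then for every compact $\mathcal{K}\subset\mathbb{S}^d$ with $d_{\mathcal{K}}>0$ there exists $\rho_{\mathcal{K},f}>0$ such that for every $\xi\in\mathcal{K}$ and every best ball $\overline{\mathcal{B}(\zeta,r_\xi)}\in\mathbf{B}_\xi^\beta$ one has $r_\xi>\rho_{\mathcal{K},f}$. -/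
open MeasureTheory Metric Filter Topology Asymptotics
open scoped ENNReal RealInnerProductSpace NNReal

noncomputable section

/-- Euclidean space `ℝⁿ`. -/
abbrev Euc (n : ℕ) : Type := EuclideanSpace ℝ (Fin n)

/-- The unit sphere `𝕊^d ⊆ ℝ^(d+1)`. -/
abbrev Sph (d : ℕ) : Type := Metric.sphere (0 : Euc (d + 1)) 1

/-- The north pole `𝐞 = (1,0,…,0)`. -/
def npole (d : ℕ) : Sph d :=
  ⟨EuclideanSpace.single 0 1, by
    rw [mem_sphere_zero_iff_norm, EuclideanSpace.norm_single]; norm_num⟩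

/-- The south pole `-𝐞`. -/
def spole (d : ℕ) : Sph d :=
  ⟨-(npole d : Euc (d + 1)), by
    rw [mem_sphere_zero_iff_norm, norm_neg, ← mem_sphere_zero_iff_norm]
    exact (npole d).2⟩

/-- Geodesic distance on the sphere. -/
def geodist {d : ℕ} (ξ η : Sph d) : ℝ :=
  Real.arccos ⟪(ξ : Euc (d + 1)), (η : Euc (d + 1))⟫

/-- Open geodesic ball. -/
def gball {d : ℕ} (ζ : Sph d) (r : ℝ) : Set (Sph d) := {η | geodist ζ η < r}

/-- Closed geodesic ball. -/
def gcball {d : ℕ} (ζ : Sph d) (r : ℝ) : Set (Sph d) := {η | geodist ζ η ≤ r}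

/-- Geodesic sphere (boundary of a geodesic ball). -/
def gsphere {d : ℕ} (ζ : Sph d) (r : ℝ) : Set (Sph d) := {η | geodist ζ η = r}

/-- The surface measure `σ` on `𝕊^d`, as the `d`-dimensional Hausdorff measure. -/
def sphMeasure (d : ℕ) : Measure (Sph d) :=
  Measure.comap Subtype.val (MeasureTheory.Measure.hausdorffMeasure (d : ℝ))

/-- The `(d-1)`-dimensional Hausdorff measure on `𝕊^d` (surface measure of boundaries of
geodesic balls). -/
def sphBdry (d : ℕ) : Measure (Sph d) :=
  Measure.comap Subtype.val (MeasureTheory.Measure.hausdorffMeasure ((d : ℝ) - 1))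

/-- Polar angle `θ(ξ) = d(𝐞, ξ)`. -/
def polarAngle {d : ℕ} (ξ : Sph d) : ℝ := geodist (npole d) ξ

/-- `w(ξ) = min{θ(ξ), π - θ(ξ)}`. -/
def sphWidth {d : ℕ} (ξ : Sph d) : ℝ := min (polarAngle ξ) (Real.pi - polarAngle ξ)

/-- A function on the sphere is polar if it only depends on `ξ ⬝ 𝐞`. -/
def IsPolar {d : ℕ} (f : Sph d → ℝ) : Prop :=
  ∀ ξ η : Sph d,
    ⟪(ξ : Euc (d + 1)), (npole d : Euc (d + 1))⟫ =
      ⟪(η : Euc (d + 1)), (npole d : Euc (d + 1))⟫ → f ξ = f η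

/-- The uncentered fractional Hardy–Littlewood maximal function `𝓜̃_β f` on `𝕊^d`. -/
def sphMax {d : ℕ} (β : ℝ) (f : Sph d → ℝ) (ξ : Sph d) : ℝ :=
  sSup {a | ∃ ζ : Sph d, ∃ r : ℝ, 0 < r ∧ r ≤ Real.pi ∧ geodist ζ ξ ≤ r ∧
    a = r ^ β * ⨍ η in gball ζ r, |f η| ∂(sphMeasure d)}

/-- The closed ball `B̄(ζ,r)` is a best ball for `𝓜̃_β f` at `ξ`, i.e. it contains `ξ` and
realizes the supremum defining `𝓜̃_β f (ξ)`. -/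
def IsBestBall {d : ℕ} (β : ℝ) (f : Sph d → ℝ) (ξ ζ : Sph d) (r : ℝ) : Prop :=
  0 ≤ r ∧ r ≤ Real.pi ∧ geodist ζ ξ ≤ r ∧
    sphMax β f ξ = r ^ β * ⨍ η in gball ζ r, |f η| ∂(sphMeasure d)

/-- Projection onto the tangent space of the sphere at `η`. -/
def tangProj {d : ℕ} (η : Sph d) (v : Euc (d + 1)) : Euc (d + 1) :=
  v - ⟪v, (η : Euc (d + 1))⟫ • (η : Euc (d + 1))

/-- `g` is the weak (tangential) gradient of `f` on `𝕊^d`: `g` is a.e. tangent and the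
integration-by-parts formula against restrictions of smooth test functions holds. -/
def HasWeakGrad {d : ℕ} (f : Sph d → ℝ) (g : Sph d → Euc (d + 1)) : Prop :=
  (∀ᵐ η ∂(sphMeasure d), ⟪g η, (η : Euc (d + 1))⟫ = 0) ∧
  ∀ φ : Euc (d + 1) → ℝ, ContDiff ℝ (⊤ : ℕ∞) φ →
    ∫ η, φ (η : Euc (d + 1)) • g η ∂(sphMeasure d)
      = - ∫ η, f η • tangProj η (gradient φ (η : Euc (d + 1))) ∂(sphMeasure d)
        + (d : ℝ) • ∫ η, (f η * φ (η : Euc (d + 1))) • (η : Euc (d + 1)) ∂(sphMeasure d)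

/-- `f ∈ W^{1,1}(𝕊^d)`, with weak gradient `g`. -/
def MemW11 {d : ℕ} (f : Sph d → ℝ) (g : Sph d → Euc (d + 1)) : Prop :=
  Integrable f (sphMeasure d) ∧ Integrable g (sphMeasure d) ∧ HasWeakGrad f g

/-- Convergence `f_j → f` in `W^{1,1}(𝕊^d)` (with weak gradients `g_j, g`). -/
def W11Tendsto {d : ℕ} (fj : ℕ → Sph d → ℝ) (gj : ℕ → Sph d → Euc (d + 1))
    (f : Sph d → ℝ) (g : Sph d → Euc (d + 1)) : Prop :=
  Tendsto (fun j => (∫ ξ, |fj j ξ - f ξ| ∂(sphMeasure d)) +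
    ∫ ξ, ‖gj j ξ - g ξ‖ ∂(sphMeasure d)) atTop (nhds 0)

/-- `u : 𝕊^d → ℝ` is differentiable at `ξ` with (tangential) gradient `G`. -/
def HasSphereGradAt {d : ℕ} (u : Sph d → ℝ) (G : Euc (d + 1)) (ξ : Sph d) : Prop :=
  ⟪G, (ξ : Euc (d + 1))⟫ = 0 ∧
    (fun η : Sph d => u η - u ξ - ⟪G, (η : Euc (d + 1)) - (ξ : Euc (d + 1))⟫)
      =o[nhds ξ] (fun η : Sph d => dist η ξ)

/-- The unit tangent vector at `η` pointing in the direction of the geodesic from `η` to `ζ`: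
`v(η,ζ) = (ζ - (η·ζ)η)/|ζ - (η·ζ)η|`. -/
def gdir {d : ℕ} (η ζ : Sph d) : Euc (d + 1) :=
  ‖(ζ : Euc (d + 1)) - ⟪(η : Euc (d + 1)), (ζ : Euc (d + 1))⟫ • (η : Euc (d + 1))‖⁻¹ •
    ((ζ : Euc (d + 1)) - ⟪(η : Euc (d + 1)), (ζ : Euc (d + 1))⟫ • (η : Euc (d + 1)))

/-- `S(η) = (η·v(ξ,𝐞))ξ - (η·ξ)v(ξ,𝐞)`. -/
def Svec {d : ℕ} (ξ η : Sph d) : Euc (d + 1) :=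
  ⟪(η : Euc (d + 1)), gdir ξ (npole d)⟫ • (ξ : Euc (d + 1)) -
    ⟪(η : Euc (d + 1)), (ξ : Euc (d + 1))⟫ • gdir ξ (npole d)

/-- `ζ` lies on the (closed) half great circle determined by `𝐞`, `ξ` and `-𝐞`
(the one passing through `ξ`). -/
def OnHalfGreatCircle {d : ℕ} (ξ ζ : Sph d) : Prop :=
  ∃ a b : ℝ, 0 ≤ b ∧ (ζ : Euc (d + 1)) = a • (npole d : Euc (d + 1)) +
    b • ((ξ : Euc (d + 1)) -
      ⟪(ξ : Euc (d + 1)), (npole d : Euc (d + 1))⟫ • (npole d : Euc (d + 1)))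

/-- `σ(r)` up to the constant `κ_{d-1}`: `∫₀^r (sin t)^{d-1} dt`. -/
def sinInt (d : ℕ) (r : ℝ) : ℝ := ∫ t in (0:ℝ)..r, (Real.sin t) ^ (d - 1)

/-- `σ'(r)` up to the constant `κ_{d-1}`: `(sin r)^{d-1}`. -/
def sinPow (d : ℕ) (r : ℝ) : ℝ := (Real.sin r) ^ (d - 1)

namespace RadiusAux

open Set

variable {d : ℕ}

lemma sphnorm (ξ : Sph d) : ‖(ξ : Euc (d + 1))‖ = 1 := by
  have := ξ.2; rwa [mem_sphere_zero_iff_norm] at this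

lemma inner_abs_le (ξ η : Sph d) : |⟪(ξ : Euc (d + 1)), (η : Euc (d + 1))⟫| ≤ 1 := by
  simpa [sphnorm] using abs_real_inner_le_norm (ξ : Euc (d + 1)) (η : Euc (d + 1))

lemma geodist_nonneg (ξ η : Sph d) : 0 ≤ geodist ξ η := Real.arccos_nonneg _

lemma geodist_le_pi (ξ η : Sph d) : geodist ξ η ≤ Real.pi := Real.arccos_le_pi _

lemma geodist_comm (ξ η : Sph d) : geodist ξ η = geodist η ξ := by
  unfold geodist; rw [real_inner_comm]

lemma geodist_self (ξ : Sph d) : geodist ξ ξ = 0 := by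
  unfold geodist
  rw [real_inner_self_eq_norm_sq, sphnorm]
  simpa using Real.arccos_one

lemma cos_geodist (ξ η : Sph d) :
    Real.cos (geodist ξ η) = ⟪(ξ : Euc (d + 1)), (η : Euc (d + 1))⟫ :=
  Real.cos_arccos (neg_le_of_abs_le (inner_abs_le _ _)) (le_of_abs_le (inner_abs_le _ _))

lemma dist_le_geodist (ξ η : Sph d) : dist ξ η ≤ geodist ξ η := by
  have h2 : dist ξ η ^ 2 ≤ geodist ξ η ^ 2 := by
    have hd2 : dist ξ η ^ 2 = 2 - 2 * ⟪(ξ : Euc (d + 1)), (η : Euc (d + 1))⟫ := by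
      rw [Subtype.dist_eq, dist_eq_norm, @norm_sub_sq_real, sphnorm, sphnorm]
      ring
    rw [hd2, ← cos_geodist]
    nlinarith [Real.one_sub_sq_div_two_le_cos (x := geodist ξ η)]
  calc dist ξ η = Real.sqrt (dist ξ η ^ 2) := (Real.sqrt_sq dist_nonneg).symm
    _ ≤ Real.sqrt (geodist ξ η ^ 2) := Real.sqrt_le_sqrt h2
    _ = geodist ξ η := Real.sqrt_sq (geodist_nonneg _ _)

lemma me_val : MeasurableEmbedding (Subtype.val : Sph d → Euc (d + 1)) :=
  MeasurableEmbedding.subtype_coe isClosed_sphere.measurableSet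

lemma sphMeasure_apply (s : Set (Sph d)) :
    sphMeasure d s = μH[(d : ℝ)] (Subtype.val '' s) := me_val.comap_apply _ _

lemma image_gball (ζ : Sph d) (r : ℝ) :
    Subtype.val '' gball ζ r
      = {x : Euc (d + 1) | ‖x‖ = 1 ∧ Real.arccos ⟪(ζ : Euc (d + 1)), x⟫ < r} := by
  ext x
  constructor
  · rintro ⟨η, hη, rfl⟩; exact ⟨sphnorm η, hη⟩
  · rintro ⟨hx, hlt⟩
    exact ⟨⟨x, by rwa [mem_sphere_zero_iff_norm]⟩, hlt, rfl⟩

lemma measure_gball_rot (ζ ζ' : Sph d) (r : ℝ) :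
    sphMeasure d (gball ζ r) = sphMeasure d (gball ζ' r) := by
  rw [sphMeasure_apply, sphMeasure_apply, image_gball, image_gball]
  set T : Euc (d + 1) ≃ₗᵢ[ℝ] Euc (d + 1) :=
    Submodule.reflection (ℝ ∙ ((ζ : Euc (d + 1)) - (ζ' : Euc (d + 1))))ᗮ with hT
  have hTζ : T (ζ : Euc (d + 1)) = (ζ' : Euc (d + 1)) :=
    Submodule.reflection_sub (by rw [sphnorm, sphnorm])
  have himg : (T : Euc (d + 1) → Euc (d + 1)) ''
        {x : Euc (d + 1) | ‖x‖ = 1 ∧ Real.arccos ⟪(ζ : Euc (d + 1)), x⟫ < r}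
      = {x : Euc (d + 1) | ‖x‖ = 1 ∧ Real.arccos ⟪(ζ' : Euc (d + 1)), x⟫ < r} := by
    ext x
    constructor
    · rintro ⟨w, ⟨hw1, hw2⟩, rfl⟩
      refine ⟨by rw [T.norm_map, hw1], ?_⟩
      rwa [← hTζ, T.inner_map_map]
    · rintro ⟨hx1, hx2⟩
      refine ⟨T.symm x, ⟨by rw [T.symm.norm_map, hx1], ?_⟩, T.apply_symm_apply x⟩
      rw [show ⟪(ζ : Euc (d + 1)), T.symm x⟫ = ⟪T (ζ : Euc (d + 1)), T (T.symm x)⟫ from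
        (T.inner_map_map _ _).symm, hTζ, T.apply_symm_apply]
      exact hx2
  have hinv := T.toIsometryEquiv.hausdorffMeasure_image (d : ℝ)
      {x : Euc (d + 1) | ‖x‖ = 1 ∧ Real.arccos ⟪(ζ : Euc (d + 1)), x⟫ < r}
  rw [show ⇑T.toIsometryEquiv = ⇑T from rfl] at hinv
  rw [← himg, hinv]

lemma sphMeasure_singleton_zero (hd : 1 ≤ d) (ξ : Sph d) : sphMeasure d {ξ} = 0 := by
  haveI : NoAtoms (μH[(d : ℝ)] : Measure (Euc (d + 1))) :=
    Measure.noAtoms_hausdorff _ (by exact_mod_cast hd)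
  rw [sphMeasure_apply, Set.image_singleton]
  haveI := Measure.nullSingletonClass_hausdorff (Euc (d + 1)) (Nat.cast_pos.mpr hd : (0:ℝ) < d)
  exact measure_singleton _

lemma gball_pi_compl_null (hd : 1 ≤ d) (ξ : Sph d) :
    sphMeasure d ((gball ξ Real.pi)ᶜ) = 0 := by
  have hsub : (gball ξ Real.pi)ᶜ ⊆
      {(⟨-(ξ : Euc (d + 1)), by
          rw [mem_sphere_zero_iff_norm, norm_neg, sphnorm]⟩ : Sph d)} := by
    intro η hη
    have hpi : geodist ξ η = Real.pi :=
      le_antisymm (geodist_le_pi _ _) (not_lt.mp hη)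
    have hinner : ⟪(ξ : Euc (d + 1)), (η : Euc (d + 1))⟫ ≤ -1 :=
      Real.arccos_eq_pi.mp hpi
    have hnn : ‖(η : Euc (d + 1)) + (ξ : Euc (d + 1))‖ ^ 2 ≤ 0 := by
      rw [@norm_add_sq_real, sphnorm, sphnorm, real_inner_comm]
      nlinarith
    have hzero : (η : Euc (d + 1)) + (ξ : Euc (d + 1)) = 0 := by
      have := norm_nonneg ((η : Euc (d + 1)) + (ξ : Euc (d + 1)))
      have h0 : ‖(η : Euc (d + 1)) + (ξ : Euc (d + 1))‖ = 0 := by nlinarith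
      exact norm_eq_zero.mp h0
    have : (η : Euc (d + 1)) = -(ξ : Euc (d + 1)) := by
      rw [eq_neg_iff_add_eq_zero]; exact hzero
    simp only [Set.mem_singleton_iff]
    exact Subtype.ext this
  exact measure_mono_null hsub (sphMeasure_singleton_zero hd _)

lemma euc_sum_sq {n : ℕ} (x : Euc n) : ∑ i, x i ^ 2 = ‖x‖ ^ 2 := by
  rw [EuclideanSpace.norm_eq, Real.sq_sqrt (by positivity)]
  simp [Real.norm_eq_abs, sq_abs]

lemma coord_le_norm {n : ℕ} (x : Euc n) (i : Fin n) : |x i| ≤ ‖x‖ := by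
  have h1 : x i ^ 2 ≤ ‖x‖ ^ 2 := by
    rw [← euc_sum_sq]
    exact Finset.single_le_sum (f := fun j => x j ^ 2) (fun j _ => sq_nonneg _)
      (Finset.mem_univ i)
  calc |x i| = Real.sqrt (x i ^ 2) := (Real.sqrt_sq_eq_abs _).symm
    _ ≤ Real.sqrt (‖x‖ ^ 2) := Real.sqrt_le_sqrt h1
    _ = ‖x‖ := Real.sqrt_sq (norm_nonneg _)

/-- Dropping the first coordinate. -/
def Ldrop (n : ℕ) : Euc (n + 1) → Euc n :=
  fun x => (WithLp.equiv 2 (Fin n → ℝ)).symm (fun k => x k.succ)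

lemma Ldrop_apply {n : ℕ} (x : Euc (n + 1)) (k : Fin n) : Ldrop n x k = x k.succ := by
  simp [Ldrop, WithLp.equiv_symm_apply, PiLp.toLp_apply]

lemma lip_Ldrop (n : ℕ) : LipschitzWith 1 (Ldrop n) := by
  apply LipschitzWith.of_dist_le_mul
  intro x y
  rw [NNReal.coe_one, one_mul, EuclideanSpace.dist_eq, EuclideanSpace.dist_eq]
  apply Real.sqrt_le_sqrt
  rw [Fin.sum_univ_succ]
  have h : ∀ k : Fin n, dist (Ldrop n x k) (Ldrop n y k) ^ 2
      = dist (x k.succ) (y k.succ) ^ 2 := fun k => by rw [Ldrop_apply, Ldrop_apply]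
  rw [Finset.sum_congr rfl (fun k _ => h k)]
  exact le_add_of_nonneg_left (by positivity)

lemma measure_gball_pos (hd : 1 ≤ d) (ζ : Sph d) {ρ : ℝ} (hρ : 0 < ρ) :
    0 < sphMeasure d (gball ζ ρ) := by
  rw [measure_gball_rot ζ (npole d) ρ]
  set ρ' := min ρ (Real.pi / 2) with hρ'def
  have hπ := Real.pi_pos
  have hρ'0 : 0 < ρ' := lt_min hρ (by positivity)
  have hρ'2 : ρ' ≤ Real.pi / 2 := min_le_right _ _
  have hsin : 0 < Real.sin ρ' :=
    Real.sin_pos_of_pos_of_lt_pi hρ'0 (by linarith)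
  have hsub : Metric.ball (0 : Euc d) (Real.sin ρ') ⊆
      Ldrop d '' (Subtype.val '' gball (npole d) ρ) := by
    intro y hy
    rw [mem_ball_zero_iff] at hy
    have hy1 : ‖y‖ < 1 := lt_of_lt_of_le hy (Real.sin_le_one _)
    have hy0 : 0 ≤ ‖y‖ := norm_nonneg y
    set c := Real.sqrt (1 - ‖y‖ ^ 2) with hcdef
    have hc0 : 0 < c := Real.sqrt_pos.mpr (by nlinarith)
    set x : Euc (d + 1) := (WithLp.equiv 2 (Fin (d + 1) → ℝ)).symm
        (Fin.cons c (fun k => y k)) with hxdef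
    have hxapp0 : x 0 = c := by
      rw [hxdef, WithLp.equiv_symm_apply, PiLp.toLp_apply]
      exact Fin.cons_zero _ _
    have hxapps : ∀ k : Fin d, x k.succ = y k := fun k => by
      rw [hxdef, WithLp.equiv_symm_apply, PiLp.toLp_apply]
      exact Fin.cons_succ _ _ _
    have hxnorm : ‖x‖ = 1 := by
      have h1 : ‖x‖ ^ 2 = 1 := by
        rw [← euc_sum_sq, Fin.sum_univ_succ, hxapp0,
          Finset.sum_congr rfl (fun k _ => by rw [hxapps k]), euc_sum_sq,
          Real.sq_sqrt (by nlinarith)]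
        ring
      nlinarith [norm_nonneg x]
    have hinner : ⟪(npole d : Euc (d + 1)), x⟫ = c := by
      rw [show (npole d : Euc (d + 1)) = EuclideanSpace.single 0 1 from rfl,
        EuclideanSpace.inner_single_left]
      simp [hxapp0]
    have harc : Real.arccos ⟪(npole d : Euc (d + 1)), x⟫ < ρ := by
      rw [hinner]
      have h1 : Real.arccos c ≤ Real.pi / 2 := Real.arccos_le_pi_div_two.mpr hc0.le
      have h2 : Real.sin (Real.arccos c) = ‖y‖ := by
        rw [Real.sin_arccos, hcdef, Real.sq_sqrt (by nlinarith), sub_sub_cancel,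
          Real.sqrt_sq hy0]
      have h3 : Real.arccos c < ρ' := by
        by_contra hcon
        push_neg at hcon
        have hmono := Real.strictMonoOn_sin.monotoneOn
            (a := ρ') (b := Real.arccos c)
            ⟨by linarith, by linarith⟩
            ⟨by linarith [Real.arccos_nonneg c], h1⟩ hcon
        rw [h2] at hmono
        linarith
      exact lt_of_lt_of_le h3 (min_le_left _ _)
    refine ⟨x, ?_, ?_⟩
    · rw [image_gball]; exact ⟨hxnorm, harc⟩
    · apply PiLp.ext
      intro k
      rw [Ldrop_apply, hxapps]
  have hcast0 : (0 : ℝ) ≤ (d : ℝ) := Nat.cast_nonneg d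
  have hpi_eq : (μH[(d : ℝ)] : Measure (Fin d → ℝ)) = volume := by
    have h := hausdorffMeasure_pi_real (ι := Fin d)
    rwa [Fintype.card_fin] at h
  have hsymm_lip : LipschitzWith ((Fintype.card (Fin d) : ℝ≥0) ^ (1 / (2 : ℝ≥0∞)).toReal)
      ((WithLp.equiv 2 (Fin d → ℝ)).symm) :=
    PiLp.lipschitzWith_toLp 2 (fun _ : Fin d => ℝ)
  have hopen : IsOpen ((WithLp.equiv 2 (Fin d → ℝ)) '' Metric.ball (0 : Euc d) (Real.sin ρ')) := by
    rw [Equiv.image_eq_preimage_symm]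
    exact IsOpen.preimage hsymm_lip.continuous Metric.isOpen_ball
  have hne : ((WithLp.equiv 2 (Fin d → ℝ)) '' Metric.ball (0 : Euc d) (Real.sin ρ')).Nonempty :=
    ⟨_, Set.mem_image_of_mem _ (by rw [mem_ball_zero_iff, norm_zero]; exact hsin)⟩
  have hvolpos : 0 < (μH[(d : ℝ)] : Measure (Fin d → ℝ))
      ((WithLp.equiv 2 (Fin d → ℝ)) '' Metric.ball (0 : Euc d) (Real.sin ρ')) := by
    rw [hpi_eq]
    exact hopen.measure_pos volume hne
  have hstep1 : (μH[(d : ℝ)] : Measure (Fin d → ℝ))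
        ((WithLp.equiv 2 (Fin d → ℝ)) '' Metric.ball (0 : Euc d) (Real.sin ρ'))
      ≤ (μH[(d : ℝ)] : Measure (Euc d)) (Metric.ball (0 : Euc d) (Real.sin ρ')) := by
    have h := (PiLp.lipschitzWith_ofLp 2 (fun _ : Fin d => ℝ)).hausdorffMeasure_image_le
        hcast0 (Metric.ball (0 : Euc d) (Real.sin ρ'))
    simpa using h
  have hstep2 : (μH[(d : ℝ)] : Measure (Euc d)) (Metric.ball (0 : Euc d) (Real.sin ρ'))
      ≤ μH[(d : ℝ)] (Ldrop d '' (Subtype.val '' gball (npole d) ρ)) := measure_mono hsub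
  have hstep3 : μH[(d : ℝ)] (Ldrop d '' (Subtype.val '' gball (npole d) ρ))
      ≤ μH[(d : ℝ)] (Subtype.val '' gball (npole d) ρ) := by
    have h := (lip_Ldrop d).hausdorffMeasure_image_le hcast0 (Subtype.val '' gball (npole d) ρ)
    simpa using h
  rw [sphMeasure_apply]
  exact lt_of_lt_of_le hvolpos (le_trans hstep1 (le_trans hstep2 hstep3))

/-- Inserting coordinate value `e` at position `i`. -/
def Fins (n : ℕ) (i : Fin (n + 1)) (e : ℝ) : Euc n → Euc (n + 1) :=
  fun y => (WithLp.equiv 2 (Fin (n + 1) → ℝ)).symm (Fin.insertNth i e (fun k => y k))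

lemma Fins_apply_same {n : ℕ} (i : Fin (n + 1)) (e : ℝ) (y : Euc n) :
    Fins n i e y i = e := by
  rw [Fins, WithLp.equiv_symm_apply, PiLp.toLp_apply]
  simp

lemma Fins_apply_succAbove {n : ℕ} (i : Fin (n + 1)) (e : ℝ) (y : Euc n) (k : Fin n) :
    Fins n i e y (i.succAbove k) = y k := by
  rw [Fins, WithLp.equiv_symm_apply, PiLp.toLp_apply]
  simp

lemma Fins_isometry (n : ℕ) (i : Fin (n + 1)) (e : ℝ) : Isometry (Fins n i e) := by
  apply Isometry.of_dist_eq
  intro y y'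
  rw [EuclideanSpace.dist_eq, EuclideanSpace.dist_eq]
  congr 1
  rw [Fin.sum_univ_succAbove _ i, Fins_apply_same, Fins_apply_same]
  simp only [Fins_apply_succAbove]
  simp

lemma lip_proj :
    LipschitzOnWith 2 (fun x : Euc (d + 1) => ‖x‖⁻¹ • x) {x : Euc (d + 1) | 1 ≤ ‖x‖} := by
  apply LipschitzOnWith.of_dist_le_mul
  intro x hx y hy
  have ha : (1 : ℝ) ≤ ‖x‖ := hx
  have hb : (1 : ℝ) ≤ ‖y‖ := hy
  have ha0 : (0 : ℝ) < ‖x‖ := by linarith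
  have hb0 : (0 : ℝ) < ‖y‖ := by linarith
  rw [dist_eq_norm, dist_eq_norm]
  have hsplit : ‖x‖⁻¹ • x - ‖y‖⁻¹ • y = ‖x‖⁻¹ • (x - y) + (‖x‖⁻¹ - ‖y‖⁻¹) • y := by
    rw [smul_sub, sub_smul]; abel
  rw [hsplit]
  have h1 : ‖‖x‖⁻¹ • (x - y)‖ ≤ ‖x - y‖ := by
    rw [norm_smul, Real.norm_eq_abs, abs_of_pos (by positivity)]
    have : ‖x‖⁻¹ ≤ 1 := inv_le_one_of_one_le₀ ha
    nlinarith [norm_nonneg (x - y)]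
  have h2 : ‖(‖x‖⁻¹ - ‖y‖⁻¹) • y‖ ≤ ‖x - y‖ := by
    rw [norm_smul, Real.norm_eq_abs]
    have habs : |‖x‖⁻¹ - ‖y‖⁻¹| = |‖y‖ - ‖x‖| / (‖x‖ * ‖y‖) := by
      rw [show ‖x‖⁻¹ - ‖y‖⁻¹ = (‖y‖ - ‖x‖) / (‖x‖ * ‖y‖) by field_simp,
        abs_div, abs_of_pos (mul_pos ha0 hb0)]
    rw [habs]
    have heq : |‖y‖ - ‖x‖| / (‖x‖ * ‖y‖) * ‖y‖ = |‖y‖ - ‖x‖| / ‖x‖ := by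
      field_simp
    rw [heq]
    have hba : |‖y‖ - ‖x‖| ≤ ‖x - y‖ := by
      rw [abs_sub_comm]
      exact abs_norm_sub_norm_le x y
    calc |‖y‖ - ‖x‖| / ‖x‖ ≤ |‖y‖ - ‖x‖| := div_le_self (abs_nonneg _) ha
      _ ≤ ‖x - y‖ := hba
  calc ‖‖x‖⁻¹ • (x - y) + (‖x‖⁻¹ - ‖y‖⁻¹) • y‖
      ≤ ‖‖x‖⁻¹ • (x - y)‖ + ‖(‖x‖⁻¹ - ‖y‖⁻¹) • y‖ := norm_add_le _ _
    _ ≤ ‖x - y‖ + ‖x - y‖ := add_le_add h1 h2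
    _ = (2 : ℝ≥0) * ‖x - y‖ := by push_cast; ring

/-- The faces of the cube. -/
def Face (d : ℕ) (p : Fin (d + 1) × Bool) : Set (Euc (d + 1)) :=
  {x : Euc (d + 1) | x p.1 = (cond p.2 1 (-1)) ∧ ∀ j, |x j| ≤ 1}

lemma sphere_cover :
    {x : Euc (d + 1) | ‖x‖ = 1} ⊆
      (fun x : Euc (d + 1) => ‖x‖⁻¹ • x) '' (⋃ p : Fin (d + 1) × Bool, Face d p) := by
  intro x hx
  have hx1 : ‖x‖ = 1 := hx
  obtain ⟨i, -, hi⟩ := Finset.exists_max_image Finset.univ (fun j => |x j|)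
    ⟨0, Finset.mem_univ 0⟩
  have hxi : x i ≠ 0 := by
    intro h0
    have hall : ∀ j, x j = 0 := fun j => by
      have hj := hi j (Finset.mem_univ j)
      rw [h0, abs_zero] at hj
      exact abs_eq_zero.mp (le_antisymm hj (abs_nonneg _))
    have : x = 0 := PiLp.ext hall
    rw [this, norm_zero] at hx1
    exact one_ne_zero hx1.symm
  have hxipos : 0 < |x i| := abs_pos.mpr hxi
  set t := |x i|⁻¹ with htdef
  have ht0 : 0 < t := by positivity
  set z := t • x with hzdef
  have hzapp : ∀ j, z j = t * x j := fun j => rfl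
  have hzi : z i = cond (decide (0 < x i)) 1 (-1) := by
    rw [hzapp]
    rcases lt_or_gt_of_ne hxi with hneg | hpos
    · have hdec : decide (0 < x i) = false := by simp [not_lt.mpr hneg.le]
      rw [hdec, Bool.cond_false, htdef, abs_of_neg hneg]
      field_simp
    · have hdec : decide (0 < x i) = true := by simp [hpos]
      rw [hdec, Bool.cond_true, htdef, abs_of_pos hpos]
      field_simp
  have hzmem : z ∈ Face d (i, decide (0 < x i)) := by
    refine ⟨hzi, fun j => ?_⟩
    rw [hzapp, abs_mul, abs_of_pos ht0, htdef]
    have h2 : |x j| ≤ |x i| := hi j (Finset.mem_univ j)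
    calc |x i|⁻¹ * |x j| ≤ |x i|⁻¹ * |x i| :=
          mul_le_mul_of_nonneg_left h2 (le_of_lt (by positivity))
      _ = 1 := inv_mul_cancel₀ (ne_of_gt hxipos)
  refine ⟨z, Set.mem_iUnion.mpr ⟨(i, decide (0 < x i)), hzmem⟩, ?_⟩
  have hznorm : ‖z‖ = t := by
    rw [hzdef, norm_smul, Real.norm_eq_abs, abs_of_pos ht0, hx1, mul_one]
  show ‖z‖⁻¹ • z = x
  rw [hznorm, hzdef, smul_smul, inv_mul_cancel₀ (ne_of_gt ht0), one_smul]

lemma cube_lt_top : (μH[(d : ℝ)] : Measure (Euc d)) {y : Euc d | ∀ j, |y j| ≤ 1} < ⊤ := by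
  have hcast0 : (0 : ℝ) ≤ (d : ℝ) := Nat.cast_nonneg d
  have hpi_eq : (μH[(d : ℝ)] : Measure (Fin d → ℝ)) = volume := by
    have h := hausdorffMeasure_pi_real (ι := Fin d)
    rwa [Fintype.card_fin] at h
  have hsymm_lip : LipschitzWith ((Fintype.card (Fin d) : ℝ≥0) ^ (1 / (2 : ℝ≥0∞)).toReal)
      ((WithLp.equiv 2 (Fin d → ℝ)).symm) :=
    PiLp.lipschitzWith_toLp 2 (fun _ : Fin d => ℝ)
  have himg2 : {y : Euc d | ∀ j, |y j| ≤ 1}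
      = (WithLp.equiv 2 (Fin d → ℝ)).symm '' {y : Fin d → ℝ | ∀ j, |y j| ≤ 1} := by
    ext y
    constructor
    · intro hy
      exact ⟨(WithLp.equiv 2 (Fin d → ℝ)) y, fun j => hy j, by simp⟩
    · rintro ⟨w, hw, rfl⟩
      intro j
      rw [WithLp.equiv_symm_apply, PiLp.toLp_apply]
      exact hw j
  rw [himg2]
  calc (μH[(d : ℝ)] : Measure (Euc d))
        ((WithLp.equiv 2 (Fin d → ℝ)).symm '' {y : Fin d → ℝ | ∀ j, |y j| ≤ 1})
      ≤ ((((Fintype.card (Fin d) : ℝ≥0) ^ (1 / (2 : ℝ≥0∞)).toReal : ℝ≥0)) : ℝ≥0∞) ^ (d : ℝ) *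
          (μH[(d : ℝ)] : Measure (Fin d → ℝ)) {y : Fin d → ℝ | ∀ j, |y j| ≤ 1} :=
        hsymm_lip.hausdorffMeasure_image_le hcast0 _
    _ < ⊤ := by
        rw [hpi_eq]
        have hcube_eq : {y : Fin d → ℝ | ∀ j, |y j| ≤ 1}
            = Set.pi Set.univ (fun _ : Fin d => Set.Icc (-1 : ℝ) 1) := by
          ext y
          simp only [Set.mem_setOf_eq, Set.mem_pi, Set.mem_univ, true_implies, Set.mem_Icc,
            abs_le]
        apply ENNReal.mul_lt_top
        · exact ENNReal.rpow_lt_top_of_nonneg hcast0 ENNReal.coe_ne_top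
        · rw [hcube_eq, volume_pi_pi]
          simp only [Real.volume_Icc]
          refine ENNReal.prod_lt_top (fun i _ => ?_)
          exact ENNReal.ofReal_lt_top
  -- done

lemma sphMeasure_univ_lt_top : sphMeasure d Set.univ < ⊤ := by
  rw [sphMeasure_apply]
  have hcast0 : (0 : ℝ) ≤ (d : ℝ) := Nat.cast_nonneg d
  have himg : (Subtype.val '' (Set.univ : Set (Sph d))) = {x : Euc (d + 1) | ‖x‖ = 1} := by
    rw [Set.image_univ, Subtype.range_coe]
    ext x
    exact mem_sphere_zero_iff_norm
  rw [himg]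
  have hUA : (⋃ p : Fin (d + 1) × Bool, Face d p) ⊆ {x : Euc (d + 1) | 1 ≤ ‖x‖} := by
    intro x hxmem
    obtain ⟨p, hp⟩ := Set.mem_iUnion.mp hxmem
    have h1 : |x p.1| = 1 := by
      rw [hp.1]; cases p.2 <;> simp
    calc (1 : ℝ) = |x p.1| := h1.symm
      _ ≤ ‖x‖ := coord_le_norm x p.1
  have hFfin : ∀ p : Fin (d + 1) × Bool, μH[(d : ℝ)] (Face d p) < ⊤ := by
    intro p
    have hsub : Face d p ⊆ Fins d p.1 (cond p.2 1 (-1)) '' {y : Euc d | ∀ j, |y j| ≤ 1} := by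
      intro x hxmem
      refine ⟨(WithLp.equiv 2 (Fin d → ℝ)).symm (fun k => x (p.1.succAbove k)), ?_, ?_⟩
      · intro j
        rw [WithLp.equiv_symm_apply, PiLp.toLp_apply]
        exact hxmem.2 _
      · apply PiLp.ext
        intro j
        by_cases hj : j = p.1
        · subst hj
          rw [Fins_apply_same, ← hxmem.1]
        · obtain ⟨k, rfl⟩ := Fin.exists_succAbove_eq hj
          rw [Fins_apply_succAbove, WithLp.equiv_symm_apply, PiLp.toLp_apply]
    calc μH[(d : ℝ)] (Face d p)
        ≤ μH[(d : ℝ)] (Fins d p.1 (cond p.2 1 (-1)) '' {y : Euc d | ∀ j, |y j| ≤ 1}) :=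
          measure_mono hsub
      _ = (μH[(d : ℝ)] : Measure (Euc d)) {y : Euc d | ∀ j, |y j| ≤ 1} :=
          (Fins_isometry d p.1 _).hausdorffMeasure_image (Or.inl hcast0) _
      _ < ⊤ := cube_lt_top
  have hUfin : μH[(d : ℝ)] (⋃ p : Fin (d + 1) × Bool, Face d p) < ⊤ := by
    refine lt_of_le_of_lt (measure_iUnion_le _) ?_
    rw [tsum_fintype]
    exact ENNReal.sum_lt_top.mpr (fun p _ => hFfin p)
  calc μH[(d : ℝ)] {x : Euc (d + 1) | ‖x‖ = 1}
      ≤ μH[(d : ℝ)] ((fun x : Euc (d + 1) => ‖x‖⁻¹ • x) ''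
          (⋃ p : Fin (d + 1) × Bool, Face d p)) := measure_mono sphere_cover
    _ ≤ ((2 : ℝ≥0) : ℝ≥0∞) ^ (d : ℝ) *
          μH[(d : ℝ)] (⋃ p : Fin (d + 1) × Bool, Face d p) :=
        (lip_proj.mono hUA).hausdorffMeasure_image_le hcast0
    _ < ⊤ := ENNReal.mul_lt_top
        (ENNReal.rpow_lt_top_of_nonneg hcast0 ENNReal.coe_ne_top) hUfin

end RadiusAux

open RadiusAux

/-- **Radii are bounded below on compacts away from the poles.** For nonnegative, not
identically zero `f ∈ W^{1,1}_pol(𝕊^d)` continuous off the poles, and any compact `𝓚` with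
`d({𝐞,-𝐞},𝓚) > 0`, there is `ρ_{𝓚,f} > 0` such that every best ball at every `ξ ∈ 𝓚` has
radius `> ρ_{𝓚,f}`. -/
theorem radius_lower_bound (d : ℕ) (hd : 1 ≤ d) (β : ℝ) (hβ0 : 0 < β) (hβd : β < d)
    (f : Sph d → ℝ) (g : Sph d → Euc (d + 1))
    (hf : MemW11 f g) (hfpol : IsPolar f) (hnn : ∀ ξ, 0 ≤ f ξ)
    (hne : ¬ ∀ᵐ ξ ∂(sphMeasure d), f ξ = 0)
    (hcont : ContinuousOn f {ξ : Sph d | ξ ≠ npole d ∧ ξ ≠ spole d})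
    (K : Set (Sph d)) (hK : IsCompact K)
    (hdK : 0 < EMetric.infEdist (npole d) K ∧ 0 < EMetric.infEdist (spole d) K) :
    ∃ ρ : ℝ, 0 < ρ ∧ ∀ ξ ∈ K, ∀ (ζ : Sph d) (r : ℝ), IsBestBall β f ξ ζ r → ρ < r := by
  have hπ := Real.pi_pos
  rcases Set.eq_empty_or_nonempty K with hKe | hKne
  · exact ⟨1, one_pos, fun ξ hξ => absurd hξ (by rw [hKe]; exact Set.notMem_empty ξ)⟩
  obtain ⟨ξ₀, hξ₀⟩ := hKne
  have hint : Integrable f (sphMeasure d) := hf.1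
  set I := ∫ ξ, |f ξ| ∂(sphMeasure d) with hIdef
  have hI0 : 0 ≤ I := integral_nonneg (fun ξ => abs_nonneg _)
  have hIpos : 0 < I := by
    rcases hI0.lt_or_eq with h | h
    · exact h
    · exfalso
      have habs : (fun ξ => |f ξ|) =ᵐ[sphMeasure d] 0 :=
        (integral_eq_zero_iff_of_nonneg (fun ξ => abs_nonneg _) hint.abs).mp h.symm
      apply hne
      filter_upwards [habs] with ξ hξ
      exact abs_eq_zero.mp hξ
  have hfin : sphMeasure d Set.univ < ⊤ := sphMeasure_univ_lt_top
  have hμ0 : sphMeasure d Set.univ ≠ 0 := by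
    intro h0
    apply hne
    rw [Measure.measure_univ_eq_zero.mp h0]
    simp
  have htopR : 0 < (sphMeasure d Set.univ).toReal := ENNReal.toReal_pos hμ0 hfin.ne
  -- the distance to the poles
  have hne1 : EMetric.infEdist (npole d) K ≠ ⊤ := Metric.infEdist_ne_top ⟨ξ₀, hξ₀⟩
  have hne2 : EMetric.infEdist (spole d) K ≠ ⊤ := Metric.infEdist_ne_top ⟨ξ₀, hξ₀⟩
  set δ : ℝ := min (EMetric.infEdist (npole d) K).toReal (EMetric.infEdist (spole d) K).toReal
    with hδdef
  have hδpos : 0 < δ :=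
    lt_min (ENNReal.toReal_pos hdK.1.ne' hne1) (ENNReal.toReal_pos hdK.2.ne' hne2)
  have hδK : ∀ x ∈ K, δ ≤ dist (npole d) x ∧ δ ≤ dist (spole d) x := by
    intro x hx
    constructor
    · calc δ ≤ (EMetric.infEdist (npole d) K).toReal := min_le_left _ _
        _ ≤ (edist (npole d) x).toReal :=
            ENNReal.toReal_mono (edist_ne_top _ _) (EMetric.infEdist_le_edist_of_mem hx)
        _ = dist (npole d) x := (dist_edist _ _).symm
    · calc δ ≤ (EMetric.infEdist (spole d) K).toReal := min_le_right _ _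
        _ ≤ (edist (spole d) x).toReal :=
            ENNReal.toReal_mono (edist_ne_top _ _) (EMetric.infEdist_le_edist_of_mem hx)
        _ = dist (spole d) x := (dist_edist _ _).symm
  -- the compact region away from the poles
  set K' := Metric.cthickening (δ/2) K with hK'def
  haveI : CompactSpace (Sph d) := isCompact_iff_compactSpace.mp (isCompact_sphere 0 1)
  have hK'comp : IsCompact K' := Metric.isClosed_cthickening.isCompact
  have hK'sub : K' ⊆ {ξ : Sph d | ξ ≠ npole d ∧ ξ ≠ spole d} := by
    intro η hη
    have key : ∀ w : Sph d, (∀ x ∈ K, δ ≤ dist w x) → η ≠ w := by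
      intro w hw hcon
      subst hcon
      rw [Metric.mem_cthickening_iff] at hη
      have hlow : ENNReal.ofReal δ ≤ EMetric.infEdist η K := by
        apply EMetric.le_infEdist.mpr
        intro y hy
        rw [edist_dist]
        exact ENNReal.ofReal_le_ofReal (hw y hy)
      have := le_trans hlow hη
      rw [ENNReal.ofReal_le_ofReal_iff (by positivity)] at this
      linarith
    exact ⟨key (npole d) (fun x hx => (hδK x hx).1), key (spole d) (fun x hx => (hδK x hx).2)⟩
  obtain ⟨M, hM⟩ := hK'comp.exists_bound_of_continuousOn (hcont.mono hK'sub)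
  have hKK' : K ⊆ K' := Metric.self_subset_cthickening K
  have hM0 : 0 ≤ M := le_trans (norm_nonneg _) (hM _ (hKK' hξ₀))
  -- geodesic balls with small radius meeting K stay in K'
  have hball : ∀ ξ ∈ K, ∀ (ζ : Sph d) (r : ℝ), r ≤ δ/4 → geodist ζ ξ ≤ r →
      gball ζ r ⊆ K' := by
    intro ξ hξ ζ r hr4 hζξ η hη
    have h4 : geodist ζ η < r := hη
    have h2 : dist η ζ ≤ geodist ζ η := by rw [geodist_comm]; exact dist_le_geodist η ζ
    have h3 : dist ζ ξ ≤ geodist ζ ξ := dist_le_geodist ζ ξ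
    have h1 : dist η ξ ≤ δ/2 := by
      calc dist η ξ ≤ dist η ζ + dist ζ ξ := dist_triangle η ζ ξ
        _ ≤ r + r := by linarith
        _ ≤ δ/2 := by linarith
    exact Metric.mem_cthickening_of_dist_le η ξ (δ/2) K hξ h1
  have hgmeas : ∀ (ζ : Sph d) (r : ℝ), MeasurableSet (gball ζ r) := by
    intro ζ r
    have hcont2 : Continuous fun η : Sph d => geodist ζ η :=
      Real.continuous_arccos.comp (continuous_const.inner continuous_subtype_val)
    exact (isOpen_lt hcont2 continuous_const).measurableSet
  -- average bounds
  have havg_nonneg : ∀ (ζ : Sph d) (r : ℝ),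
      0 ≤ ⨍ η in gball ζ r, |f η| ∂(sphMeasure d) := by
    intro ζ r
    rw [setAverage_eq, smul_eq_mul]
    exact mul_nonneg (by positivity)
      (integral_nonneg (fun η => abs_nonneg (f η)))
  have havgM : ∀ (ζ : Sph d) (r : ℝ), gball ζ r ⊆ K' →
      ⨍ η in gball ζ r, |f η| ∂(sphMeasure d) ≤ M := by
    intro ζ r hsub
    rw [setAverage_eq, smul_eq_mul]
    rcases eq_or_ne (sphMeasure d (gball ζ r)) 0 with h0 | h0
    · rw [measureReal_def, h0]
      simp only [ENNReal.toReal_zero, inv_zero, zero_mul]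
      exact hM0
    · have hlt : sphMeasure d (gball ζ r) < ⊤ :=
        lt_of_le_of_lt (measure_mono (Set.subset_univ _)) hfin
      have htr : 0 < (sphMeasure d (gball ζ r)).toReal := ENNReal.toReal_pos h0 hlt.ne
      have hle : ∫ η in gball ζ r, |f η| ∂(sphMeasure d)
          ≤ M * (sphMeasure d (gball ζ r)).toReal := by
        have hmon := setIntegral_mono_on hint.abs.integrableOn
          (integrableOn_const (C := M) hlt.ne) (hgmeas ζ r)
          (fun η hη => by rw [← Real.norm_eq_abs]; exact hM η (hsub hη))
        calc ∫ η in gball ζ r, |f η| ∂(sphMeasure d)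
            ≤ ∫ _ in gball ζ r, M ∂(sphMeasure d) := hmon
          _ = M * (sphMeasure d (gball ζ r)).toReal := by
              rw [setIntegral_const, smul_eq_mul, measureReal_def]; ring
      calc (sphMeasure d (gball ζ r)).toReal⁻¹ * ∫ η in gball ζ r, |f η| ∂(sphMeasure d)
          ≤ (sphMeasure d (gball ζ r)).toReal⁻¹ *
            (M * (sphMeasure d (gball ζ r)).toReal) :=
            mul_le_mul_of_nonneg_left hle (by positivity)
        _ = M := by field_simp
  have havgI : ∀ (ζ : Sph d) (r : ℝ),
      ⨍ η in gball ζ r, |f η| ∂(sphMeasure d)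
        ≤ (sphMeasure d (gball ζ r)).toReal⁻¹ * I := by
    intro ζ r
    rw [setAverage_eq, smul_eq_mul]
    refine mul_le_mul_of_nonneg_left ?_ (by positivity)
    exact setIntegral_le_integral hint.abs (Filter.Eventually.of_forall (fun η => abs_nonneg _))
  -- the uniform lower bound for the measure of balls of radius δ/8
  set m : ℝ := (sphMeasure d (gball (npole d) (δ/8))).toReal with hmdef
  have hm : 0 < m :=
    ENNReal.toReal_pos (measure_gball_pos hd _ (by positivity)).ne'
      (lt_of_le_of_lt (measure_mono (Set.subset_univ _)) hfin).ne
  -- boundedness of the family defining the maximal function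
  have hbdd : ∀ ξ ∈ K, BddAbove {a | ∃ ζ : Sph d, ∃ r : ℝ, 0 < r ∧ r ≤ Real.pi ∧
      geodist ζ ξ ≤ r ∧ a = r ^ β * ⨍ η in gball ζ r, |f η| ∂(sphMeasure d)} := by
    intro ξ hξ
    refine ⟨Real.pi ^ β * max (m⁻¹ * I) M, ?_⟩
    rintro a ⟨ζ, r, hr0, hrπ, hζξ, rfl⟩
    have hrβ : r ^ β ≤ Real.pi ^ β := Real.rpow_le_rpow hr0.le hrπ hβ0.le
    have hmaxnn : 0 ≤ max (m⁻¹ * I) M := le_trans hM0 (le_max_right _ _)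
    rcases le_or_gt r (δ/8) with hsmall | hlarge
    · have hsubK' : gball ζ r ⊆ K' := hball ξ hξ ζ r (by linarith) hζξ
      calc r ^ β * ⨍ η in gball ζ r, |f η| ∂(sphMeasure d)
          ≤ Real.pi ^ β * M :=
            mul_le_mul hrβ (havgM ζ r hsubK') (havg_nonneg ζ r) (by positivity)
        _ ≤ Real.pi ^ β * max (m⁻¹ * I) M :=
            mul_le_mul_of_nonneg_left (le_max_right _ _) (by positivity)
    · have hmono : sphMeasure d (gball (npole d) (δ/8)) ≤ sphMeasure d (gball ζ r) := by
        rw [measure_gball_rot (npole d) ζ (δ/8)]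
        exact measure_mono (fun η hη => lt_trans hη hlarge)
      have hminv : (sphMeasure d (gball ζ r)).toReal⁻¹ ≤ m⁻¹ := by
        apply inv_anti₀ hm
        exact ENNReal.toReal_mono
          (lt_of_le_of_lt (measure_mono (Set.subset_univ _)) hfin).ne hmono
      have h1 : ⨍ η in gball ζ r, |f η| ∂(sphMeasure d) ≤ m⁻¹ * I :=
        le_trans (havgI ζ r) (mul_le_mul_of_nonneg_right hminv hI0)
      calc r ^ β * ⨍ η in gball ζ r, |f η| ∂(sphMeasure d)
          ≤ Real.pi ^ β * (m⁻¹ * I) :=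
            mul_le_mul hrβ h1 (havg_nonneg ζ r) (by positivity)
        _ ≤ Real.pi ^ β * max (m⁻¹ * I) M :=
            mul_le_mul_of_nonneg_left (le_max_left _ _) (by positivity)
  -- lower bound on the maximal function
  set A := Real.pi ^ β * ((sphMeasure d Set.univ).toReal⁻¹ * I) with hAdef
  have hApos : 0 < A :=
    mul_pos (Real.rpow_pos_of_pos hπ β) (mul_pos (inv_pos.mpr htopR) hIpos)
  have hlb : ∀ ξ ∈ K, A ≤ sphMax β f ξ := by
    intro ξ hξ
    have hmem : Real.pi ^ β * ⨍ η in gball ξ Real.pi, |f η| ∂(sphMeasure d) ∈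
        {a | ∃ ζ : Sph d, ∃ r : ℝ, 0 < r ∧ r ≤ Real.pi ∧ geodist ζ ξ ≤ r ∧
          a = r ^ β * ⨍ η in gball ζ r, |f η| ∂(sphMeasure d)} :=
      ⟨ξ, Real.pi, hπ, le_refl _, by rw [geodist_self]; exact hπ.le, rfl⟩
    have hle := le_csSup (hbdd ξ hξ) hmem
    have hae : gball ξ Real.pi =ᵐ[sphMeasure d] (Set.univ : Set (Sph d)) :=
      ae_eq_univ.mpr (gball_pi_compl_null hd ξ)
    have havg : ⨍ η in gball ξ Real.pi, |f η| ∂(sphMeasure d)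
        = (sphMeasure d Set.univ).toReal⁻¹ * I := by
      rw [setAverage_eq, smul_eq_mul, measureReal_def, measure_congr hae,
        Measure.restrict_congr_set hae, Measure.restrict_univ]
    calc A = Real.pi ^ β * ⨍ η in gball ξ Real.pi, |f η| ∂(sphMeasure d) := by
          rw [hAdef, havg]
      _ ≤ sphMax β f ξ := hle
  -- the choice of ρ
  set ρ₁ := (A/(2*(M+1))) ^ (β⁻¹) with hρ₁def
  have hρ₁pos : 0 < ρ₁ := Real.rpow_pos_of_pos (by positivity) _
  refine ⟨min (δ/8) ρ₁, lt_min (by positivity) hρ₁pos, ?_⟩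
  intro ξ hξ ζ r hbest
  by_contra hcon
  push_neg at hcon
  obtain ⟨hr0, hrπ, hζξ, heq⟩ := hbest
  have hrδ : r ≤ δ/8 := le_trans hcon (min_le_left _ _)
  have hrρ : r ≤ ρ₁ := le_trans hcon (min_le_right _ _)
  have hsubK' : gball ζ r ⊆ K' := hball ξ hξ ζ r (by linarith) hζξ
  have h1 : sphMax β f ξ ≤ r ^ β * M := by
    rw [heq]
    exact mul_le_mul_of_nonneg_left (havgM ζ r hsubK') (Real.rpow_nonneg hr0 β)
  have h2 : r ^ β ≤ A/(2*(M+1)) := by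
    calc r ^ β ≤ ρ₁ ^ β := Real.rpow_le_rpow hr0 hrρ hβ0.le
      _ = A/(2*(M+1)) := Real.rpow_inv_rpow (by positivity) (ne_of_gt hβ0)
  have h3 : sphMax β f ξ ≤ A/2 := by
    calc sphMax β f ξ ≤ r ^ β * M := h1
      _ ≤ (A/(2*(M+1))) * (M+1) :=
          mul_le_mul h2 (by linarith) hM0 (by positivity)
      _ = A/2 := by
          have hM1 : (M : ℝ) + 1 ≠ 0 := by positivity
          field_simp
  have h4 := hlb ξ hξ
  linarith

end
end

section
/- Let $0<\beta<d$, let $f\in W^{1,1}_{\mathrm{pol}}(\mathbb{S}^d)$ be nonnegative, not identically zero, and continuous on $\mathbb{S}^d\setminus\{\mathbf{e},-\mathbf{e}\}$, and let $\{f_j\}\subset W^{1,1}_{\mathrm{pol}}(\mathbb{S}^d)$ be nonnegative, continuous on $\mathbb{S}^d\setminus\{\mathbf{e},-\mathbf{e}\}$, with $f_j\to f$ in $W^{1,1}(\mathbb{S}^d)$. Then for every compact $\mathcal{K}\subset\mathbb{S}^d$ with $d_{\mathcal{K}}>0$ there exists $\rho>0$ such that for all sufficiently large $j$ and all $\xi\in\mathcal{K}$,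 every best ball $\overline{\mathcal{B}(\zeta_{\xi,j},r_{\xi,j})}\in\mathbf{B}_{\xi,j}^\beta$ for $f_j$ satisfies $r_{\xi,j}>\rho$. -/
open MeasureTheory Metric Filter Topology Asymptotics
open scoped ENNReal RealInnerProductSpace NNReal

noncomputable section

namespace RLB
open Real

variable {d : ℕ}

lemma npole_coe : ((npole d) : Euc (d + 1)) = EuclideanSpace.single 0 1 := rfl

lemma norm_coe (ξ : Sph d) : ‖(ξ : Euc (d + 1))‖ = 1 := by
  have := ξ.2; rwa [mem_sphere_zero_iff_norm] at this

lemma inner_npole (x : Euc (d + 1)) :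
    ⟪x, ((npole d) : Euc (d + 1))⟫ = x 0 := by
  rw [npole_coe, EuclideanSpace.inner_single_right]
  simp

/-- The `t`-coordinate (cosine of polar angle). -/
def T (ξ : Sph d) : ℝ := (ξ : Euc (d + 1)) 0

lemma inner_self (ξ : Sph d) : ⟪(ξ : Euc (d + 1)), (ξ : Euc (d + 1))⟫ = 1 := by
  rw [real_inner_self_eq_norm_sq, norm_coe]; norm_num

lemma inner_le_one (ξ η : Sph d) : ⟪(ξ : Euc (d + 1)), (η : Euc (d + 1))⟫ ≤ 1 := by
  have h := abs_real_inner_le_norm (ξ : Euc (d + 1)) (η : Euc (d + 1))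
  rw [norm_coe, norm_coe] at h
  norm_num at h
  exact (abs_le.1 h).2

lemma neg_one_le_inner (ξ η : Sph d) :
    -1 ≤ ⟪(ξ : Euc (d + 1)), (η : Euc (d + 1))⟫ := by
  have h := abs_real_inner_le_norm (ξ : Euc (d + 1)) (η : Euc (d + 1))
  rw [norm_coe, norm_coe] at h
  norm_num at h
  exact (abs_le.1 h).1

lemma geodist_nonneg (ξ η : Sph d) : 0 ≤ geodist ξ η := Real.arccos_nonneg _

lemma geodist_le_pi (ξ η : Sph d) : geodist ξ η ≤ π := Real.arccos_le_pi _

lemma geodist_self (ξ : Sph d) : geodist ξ ξ = 0 := by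
  rw [geodist, inner_self, Real.arccos_one]

lemma cos_geodist (ξ η : Sph d) :
    Real.cos (geodist ξ η) = ⟪(ξ : Euc (d + 1)), (η : Euc (d + 1))⟫ :=
  Real.cos_arccos (neg_one_le_inner _ _) (inner_le_one _ _)

lemma geodist_lt_iff {ζ η : Sph d} {r : ℝ} (hr0 : 0 ≤ r) (hrπ : r ≤ π) :
    geodist ζ η < r ↔ Real.cos r < ⟪(ζ : Euc (d + 1)), (η : Euc (d + 1))⟫ := by
  constructor
  · intro h
    rw [← cos_geodist]
    exact Real.cos_lt_cos_of_nonneg_of_le_pi (geodist_nonneg _ _) hrπ h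
  · intro h
    by_contra hc
    have : Real.cos (geodist ζ η) ≤ Real.cos r :=
      Real.cos_le_cos_of_nonneg_of_le_pi hr0 (geodist_le_pi _ _) (not_lt.1 hc)
    rw [cos_geodist] at this
    linarith

lemma dist_sq (ξ η : Sph d) :
    ‖(ξ : Euc (d + 1)) - (η : Euc (d + 1))‖ ^ 2
      = 2 - 2 * ⟪(ξ : Euc (d + 1)), (η : Euc (d + 1))⟫ := by
  rw [@norm_sub_sq_real, norm_coe, norm_coe]; ring

lemma norm_sub_le_geodist (ξ η : Sph d) :
    ‖(ξ : Euc (d + 1)) - (η : Euc (d + 1))‖ ≤ geodist ξ η := by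
  have h1 : ‖(ξ : Euc (d + 1)) - (η : Euc (d + 1))‖ ^ 2 ≤ (geodist ξ η) ^ 2 := by
    rw [dist_sq]
    have := Real.one_sub_sq_div_two_le_cos (x := geodist ξ η)
    rw [cos_geodist] at this
    nlinarith
  have h2 : 0 ≤ geodist ξ η := geodist_nonneg _ _
  nlinarith [norm_nonneg ((ξ : Euc (d + 1)) - (η : Euc (d + 1)))]

lemma abs_coord_le (x : Euc (d + 1)) (i : Fin (d + 1)) : |x i| ≤ ‖x‖ := by
  have h := abs_real_inner_le_norm (EuclideanSpace.single i (1:ℝ)) x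
  rw [EuclideanSpace.inner_single_left] at h
  simpa [EuclideanSpace.norm_single] using h

lemma abs_T_le_one (ξ : Sph d) : |T ξ| ≤ 1 := by
  have := abs_coord_le (ξ : Euc (d + 1)) 0
  rwa [norm_coe] at this

lemma abs_T_sub_le (ξ η : Sph d) : |T ξ - T η| ≤ geodist ξ η := by
  have h1 : |T ξ - T η| ≤ ‖(ξ : Euc (d + 1)) - (η : Euc (d + 1))‖ := by
    have := abs_coord_le ((ξ : Euc (d + 1)) - (η : Euc (d + 1))) 0
    simpa [T] using this
  exact h1.trans (norm_sub_le_geodist _ _)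

lemma T_npole : T (npole d) = 1 := by
  simp [T, npole_coe]

lemma eq_npole_of_T {ξ : Sph d} (h : T ξ = 1) : ξ = npole d := by
  have h2 : ⟪(ξ : Euc (d + 1)), ((npole d) : Euc (d + 1))⟫ = 1 := by
    rw [inner_npole]; exact h
  have h3 : ‖(ξ : Euc (d + 1)) - ((npole d) : Euc (d + 1))‖ ^ 2 = 0 := by
    rw [dist_sq, h2]; ring
  have h4 := pow_eq_zero_iff (n := 2) (by norm_num) |>.1 h3
  ext1
  rwa [norm_sub_eq_zero_iff] at h4

lemma eq_spole_of_T {ξ : Sph d} (h : T ξ = -1) : ξ = spole d := by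
  have h2 : ⟪(ξ : Euc (d + 1)), ((npole d) : Euc (d + 1))⟫ = -1 := by
    rw [inner_npole]; exact h
  have h3 : ‖(ξ : Euc (d + 1)) + ((npole d) : Euc (d + 1))‖ ^ 2 = 0 := by
    rw [@norm_add_sq_real, norm_coe, norm_coe, h2]; ring
  have h4 := pow_eq_zero_iff (n := 2) (by norm_num) |>.1 h3
  ext1
  have : (ξ : Euc (d + 1)) = -((npole d) : Euc (d + 1)) := by
    have := norm_eq_zero.1 h4
    linear_combination (norm := module) this
  simpa [spole] using this

end RLB
namespace RLB

lemma mem_gball_iff {ζ η : Sph d} {r : ℝ} (hr0 : 0 ≤ r) (hrπ : r ≤ Real.pi) :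
    η ∈ gball ζ r ↔ Real.cos r < ⟪(ζ : Euc (d + 1)), (η : Euc (d + 1))⟫ :=
  geodist_lt_iff hr0 hrπ

lemma continuous_geodist (ζ : Sph d) : Continuous (fun η : Sph d => geodist ζ η) := by
  apply Real.continuous_arccos.comp
  exact (continuous_inner (𝕜 := ℝ) (E := Euc (d + 1))).comp
    (continuous_const.prodMk continuous_subtype_val)

lemma isOpen_gball (ζ : Sph d) (r : ℝ) : IsOpen (gball ζ r) :=
  isOpen_lt (continuous_geodist ζ) continuous_const

lemma measurableSet_gball (ζ : Sph d) (r : ℝ) : MeasurableSet (gball ζ r) :=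
  (isOpen_gball ζ r).measurableSet

lemma continuous_T : Continuous (T (d := d)) := by
  have : Continuous fun x : Euc (d + 1) => x 0 := by
    exact (continuous_apply 0).comp (PiLp.continuous_ofLp 2 _)
  exact this.comp continuous_subtype_val

lemma measurable_sphere_set :
    MeasurableSet (Metric.sphere (0 : Euc (d + 1)) 1 : Set (Euc (d + 1))) :=
  Metric.isClosed_sphere.measurableSet

lemma coe_measurableEmbedding :
    MeasurableEmbedding ((↑) : Sph d → Euc (d + 1)) :=
  MeasurableEmbedding.subtype_coe measurable_sphere_set

lemma sphMeasure_apply (s : Set (Sph d)) :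
    sphMeasure d s = μH[(d : ℝ)] (Subtype.val '' s) :=
  coe_measurableEmbedding.comap_apply _ _

lemma measure_gball_eq (ζ ζ' : Sph d) (r : ℝ) :
    sphMeasure d (gball ζ r) = sphMeasure d (gball ζ' r) := by
  set R := Submodule.reflection (ℝ ∙ ((ζ : Euc (d + 1)) - (ζ' : Euc (d + 1))))ᗮ with hR
  have hζ : R (ζ : Euc (d + 1)) = (ζ' : Euc (d + 1)) :=
    Submodule.reflection_sub (by rw [norm_coe, norm_coe])
  have hRR : ∀ x, R (R x) = x := fun x => Submodule.reflection_reflection _ x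
  have himg : Subtype.val '' gball ζ' r = R '' (Subtype.val '' gball ζ r) := by
    ext z
    constructor
    · rintro ⟨η, hη, rfl⟩
      refine ⟨R (η : Euc (d + 1)), ⟨⟨R (η : Euc (d + 1)), ?_⟩, ?_, rfl⟩, hRR _⟩
      · rw [mem_sphere_zero_iff_norm, R.norm_map, norm_coe]
      · show geodist ζ _ < r
        show Real.arccos _ < r
        have : ⟪(ζ : Euc (d + 1)), R (η : Euc (d + 1))⟫
            = ⟪(ζ' : Euc (d + 1)), (η : Euc (d + 1))⟫ := by
          conv_lhs => rw [show (ζ : Euc (d+1)) = R (R (ζ : Euc (d+1))) from (hRR _).symm]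
          rw [R.inner_map_map, hζ]
        rw [this]
        exact hη
    · rintro ⟨z', ⟨η, hη, rfl⟩, rfl⟩
      refine ⟨⟨R (η : Euc (d + 1)), ?_⟩, ?_, rfl⟩
      · rw [mem_sphere_zero_iff_norm, R.norm_map, norm_coe]
      · show Real.arccos _ < r
        have : ⟪(ζ' : Euc (d + 1)), R (η : Euc (d + 1))⟫
            = ⟪(ζ : Euc (d + 1)), (η : Euc (d + 1))⟫ := by
          rw [← hζ, R.inner_map_map]
        rw [this]
        exact hη
  rw [sphMeasure_apply, sphMeasure_apply, himg,
    R.isometry.hausdorffMeasure_image (Or.inr R.surjective)]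

end RLB
namespace RLB

lemma normalize_lipschitz_aux {x y : Euc (d + 1)} (hx : 1 ≤ ‖x‖) (hy : 1 ≤ ‖y‖) :
    ‖‖x‖⁻¹ • x - ‖y‖⁻¹ • y‖ ≤ 2 * ‖x - y‖ := by
  set a := ‖x‖ with ha
  set b := ‖y‖ with hb
  have ha0 : 0 < a := lt_of_lt_of_le one_pos hx
  have hb0 : 0 < b := lt_of_lt_of_le one_pos hy
  have h1 : ‖a⁻¹ • x - b⁻¹ • y‖ ≤ ‖a⁻¹ • x - a⁻¹ • y‖ + ‖a⁻¹ • y - b⁻¹ • y‖ := by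
    have := norm_sub_le_norm_sub_add_norm_sub (a⁻¹ • x) (a⁻¹ • y) (b⁻¹ • y)
    exact this
  have h2 : ‖a⁻¹ • x - a⁻¹ • y‖ = a⁻¹ * ‖x - y‖ := by
    rw [← smul_sub, norm_smul, Real.norm_eq_abs, abs_of_pos (inv_pos.2 ha0)]
  have h3 : ‖a⁻¹ • y - b⁻¹ • y‖ = |a⁻¹ - b⁻¹| * b := by
    rw [← sub_smul, norm_smul, Real.norm_eq_abs, ← hb]
  have h4 : |a⁻¹ - b⁻¹| * b = |b - a| / a := by
    have he : a⁻¹ - b⁻¹ = (b - a) / (a * b) := by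
      field_simp
    rw [he, abs_div, abs_of_pos (mul_pos ha0 hb0)]
    field_simp
    skip
  have h5 : |b - a| ≤ ‖x - y‖ := by
    rw [abs_sub_comm]
    exact (abs_norm_sub_norm_le x y)
  have hinv : a⁻¹ ≤ 1 := inv_le_one_of_one_le₀ hx
  have hxy : (0:ℝ) ≤ ‖x - y‖ := norm_nonneg _
  have e1 : a⁻¹ * ‖x - y‖ ≤ ‖x - y‖ := mul_le_of_le_one_left hxy hinv
  have e2 : |b - a| / a ≤ ‖x - y‖ := by
    rw [div_le_iff₀ ha0]
    exact h5.trans (le_mul_of_one_le_right hxy hx)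
  have := h1
  rw [h2, h3, h4] at this
  linarith

lemma normalize_lipschitzOnWith :
    LipschitzOnWith 2 (fun x : Euc (d + 1) => ‖x‖⁻¹ • x) {x : Euc (d + 1) | 1 ≤ ‖x‖} := by
  rw [lipschitzOnWith_iff_dist_le_mul]
  intro x hx y hy
  simp only [dist_eq_norm]
  simpa using normalize_lipschitz_aux hx hy

/-- abbreviation for the pi-space -/
abbrev Pi1 (d : ℕ) := Fin d → ℝ

noncomputable def eqSymm (d : ℕ) : Pi1 (d + 1) → Euc (d + 1) :=
  (WithLp.equiv 2 (Pi1 (d + 1))).symm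

lemma eqSymm_lipschitz : ∃ c : ℝ≥0, LipschitzWith c (eqSymm d) := by
  have h := PiLp.antilipschitzWith_ofLp 2 (fun _ : Fin (d + 1) => ℝ)
  refine ⟨(Fintype.card (Fin (d + 1)) : ℝ≥0) ^ ((1:ℝ≥0∞)/2).toReal, fun x y => ?_⟩
  have := h (eqSymm d x) (eqSymm d y)
  simpa [eqSymm] using this

/-- cube faces -/
def face (d : ℕ) (i : Fin (d + 1)) (b : Bool) : Set (Pi1 (d + 1)) :=
  {w | w i = (if b then (1 : ℝ) else -1) ∧ ∀ j, |w j| ≤ 1}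

lemma face_hausdorff_lt_top (i : Fin (d + 1)) (b : Bool) :
    μH[(d : ℝ)] (face d i b) < ∞ := by
  classical
  set c : ℝ := if b then (1 : ℝ) else -1
  set J : Pi1 d → Pi1 (d + 1) := fun y => Fin.insertNth i c y with hJ
  have hJL : LipschitzWith 1 J := by
    apply LipschitzWith.of_dist_le_mul
    intro y y'
    rw [NNReal.coe_one, one_mul, dist_pi_le_iff dist_nonneg]
    intro k
    rcases eq_or_ne k i with rfl | hk
    · simp only [hJ, Fin.insertNth_apply_same, dist_self]
      exact dist_nonneg
    · obtain ⟨j, rfl⟩ := Fin.exists_succAbove_eq hk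
      simp only [hJ, Fin.insertNth_apply_succAbove]
      exact dist_le_pi_dist y y' j
  have hsub : face d i b ⊆ J '' (Metric.closedBall 0 1) := by
    intro w hw
    refine ⟨fun j => w (i.succAbove j), ?_, ?_⟩
    · rw [mem_closedBall_zero_iff, pi_norm_le_iff_of_nonneg zero_le_one]
      intro j
      rw [Real.norm_eq_abs]
      exact hw.2 _
    · rw [hJ]
      simp only
      rw [show c = w i from hw.1.symm]
      exact Fin.insertNth_self_removeNth i w
  calc μH[(d : ℝ)] (face d i b) ≤ μH[(d : ℝ)] (J '' Metric.closedBall 0 1) :=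
        measure_mono hsub
    _ ≤ (1 : ℝ≥0) ^ (d : ℝ) * μH[(d : ℝ)] (Metric.closedBall (0 : Pi1 d) 1) :=
        hJL.hausdorffMeasure_image_le (Nat.cast_nonneg d) _
    _ < ∞ := by
        rw [show ((d : ℝ)) = ((Fintype.card (Fin d) : ℕ) : ℝ) by simp,
          MeasureTheory.hausdorffMeasure_pi_real]
        simp only [ENNReal.coe_one, ENNReal.one_rpow, one_mul]
        exact (isCompact_closedBall _ _).measure_lt_top

lemma sphere_cover :
    (Metric.sphere (0 : Euc (d + 1)) 1 : Set (Euc (d + 1))) ⊆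
      (fun x : Euc (d + 1) => ‖x‖⁻¹ • x) ''
        (eqSymm d '' (⋃ p : Fin (d + 1) × Bool, face d p.1 p.2)) := by
  intro ξ hξ
  rw [mem_sphere_zero_iff_norm] at hξ
  obtain ⟨i, hi⟩ := Finite.exists_max (fun j => |ξ j|)
  have hMpos : 0 < |ξ i| := by
    by_contra h
    push_neg at h
    have : ∀ j, ξ j = 0 := fun j => abs_eq_zero.1 (le_antisymm ((hi j).trans h) (abs_nonneg _))
    have : ξ = 0 := by
      ext j; exact this j
    rw [this] at hξ
    simp at hξ
  set M := |ξ i| with hM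
  set w : Pi1 (d + 1) := fun j => ξ j / M with hw
  have hne : ξ i ≠ 0 := by
    intro h0
    rw [hM, h0] at hMpos
    simp at hMpos
  have hwi : w i = 1 ∨ w i = -1 := by
    rcases abs_cases (ξ i) with ⟨h1, _⟩ | ⟨h1, _⟩
    · left; show ξ i / M = 1; rw [hM, h1, div_self hne]
    · right; show ξ i / M = -1; rw [hM, h1, div_neg, div_self hne]
  refine ⟨eqSymm d w, ⟨w, ?_, rfl⟩, ?_⟩
  · apply Set.mem_iUnion.2
    refine ⟨⟨i, if w i = 1 then true else false⟩, ?_, fun j => ?_⟩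
    · rcases hwi with h | h <;> rw [h] <;> norm_num
    · rw [hw]
      simp only
      rw [abs_div, abs_of_pos hMpos, div_le_one hMpos]
      exact hi j
  · have hwc : eqSymm d w = M⁻¹ • (ξ : Euc (d + 1)) := by
      ext j
      simp [eqSymm, hw, div_eq_inv_mul]
    rw [hwc]
    show ‖M⁻¹ • ξ‖⁻¹ • (M⁻¹ • ξ) = ξ
    rw [norm_smul, hξ, Real.norm_eq_abs, abs_of_pos (inv_pos.2 hMpos), smul_smul]
    rw [mul_one, inv_inv, mul_inv_cancel₀ (ne_of_gt hMpos), one_smul]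

lemma sphMeasure_univ_lt_top : sphMeasure d (Set.univ) < ∞ := by
  obtain ⟨c, hc⟩ := eqSymm_lipschitz (d := d)
  rw [sphMeasure_apply, Set.image_univ, Subtype.range_coe]
  have hmaps : Set.MapsTo (eqSymm d) (⋃ p : Fin (d + 1) × Bool, face d p.1 p.2)
      {x : Euc (d + 1) | 1 ≤ ‖x‖} := by
    rintro w hw
    simp only [Set.mem_iUnion] at hw
    obtain ⟨⟨i, b⟩, hwi, hwb⟩ := hw
    have h1 : |eqSymm d w i| ≤ ‖eqSymm d w‖ := abs_coord_le _ i
    have h2 : |eqSymm d w i| = 1 := by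
      have : eqSymm d w i = w i := rfl
      rw [this, hwi]
      cases b <;> norm_num
    exact Set.mem_setOf.2 (h2 ▸ h1)
  have hlip := (normalize_lipschitzOnWith (d := d)).comp
    (hc.lipschitzOnWith (s := ⋃ p : Fin (d + 1) × Bool, face d p.1 p.2)) hmaps
  calc μH[(d : ℝ)] (Metric.sphere (0 : Euc (d + 1)) 1 : Set (Euc (d + 1)))
      ≤ μH[(d : ℝ)] ((fun x : Euc (d + 1) => ‖x‖⁻¹ • x) ''
        (eqSymm d '' (⋃ p : Fin (d + 1) × Bool, face d p.1 p.2))) :=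
        measure_mono sphere_cover
    _ = μH[(d : ℝ)] (((fun x : Euc (d + 1) => ‖x‖⁻¹ • x) ∘ eqSymm d) ''
        (⋃ p : Fin (d + 1) × Bool, face d p.1 p.2)) := by rw [Set.image_comp]
    _ ≤ (2 * c : ℝ≥0) ^ (d : ℝ) *
        μH[(d : ℝ)] (⋃ p : Fin (d + 1) × Bool, face d p.1 p.2) :=
        hlip.hausdorffMeasure_image_le (Nat.cast_nonneg d)
    _ ≤ (2 * c : ℝ≥0) ^ (d : ℝ) * ∑' p : Fin (d + 1) × Bool, μH[(d : ℝ)] (face d p.1 p.2) := by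
        gcongr
        exact measure_iUnion_le _
    _ < ∞ := by
        apply ENNReal.mul_lt_top
        · exact ENNReal.rpow_lt_top_of_nonneg (Nat.cast_nonneg d) ENNReal.coe_ne_top
        · rw [tsum_fintype]
          exact ENNReal.sum_lt_top.2 fun p _ => face_hausdorff_lt_top p.1 p.2

instance : IsFiniteMeasure (sphMeasure d) :=
  ⟨sphMeasure_univ_lt_top⟩

end RLB
namespace RLB

/-- Coordinate-selection map between Euclidean spaces. -/
noncomputable def proj {m n : ℕ} (ι : Fin m → Fin n) (x : Euc n) : Euc m :=
  (WithLp.equiv 2 (Fin m → ℝ)).symm (fun j => x (ι j))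

lemma proj_apply {m n : ℕ} (ι : Fin m → Fin n) (x : Euc n) (j : Fin m) :
    proj ι x j = x (ι j) := rfl

lemma norm_sq_eq {n : ℕ} (x : Euc n) : ‖x‖ ^ 2 = ∑ i, (x i) ^ 2 := by
  rw [EuclideanSpace.norm_eq, Real.sq_sqrt]
  · congr 1; funext i; rw [Real.norm_eq_abs, sq_abs]
  · positivity

lemma norm_proj_le {m n : ℕ} {ι : Fin m → Fin n} (hι : Function.Injective ι) (x : Euc n) :
    ‖proj ι x‖ ≤ ‖x‖ := by
  have h2 : ‖proj ι x‖ ^ 2 ≤ ‖x‖ ^ 2 := by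
    rw [norm_sq_eq, norm_sq_eq]
    have : ∑ j : Fin m, (proj ι x j) ^ 2 = ∑ k ∈ Finset.univ.image ι, (x k) ^ 2 := by
      rw [Finset.sum_image (fun a _ b _ h => hι h)]
      rfl
    rw [this]
    exact Finset.sum_le_sum_of_subset_of_nonneg (Finset.subset_univ _)
      (fun k _ _ => sq_nonneg _)
  nlinarith [norm_nonneg (proj ι x), norm_nonneg x]

lemma proj_lipschitz {m n : ℕ} {ι : Fin m → Fin n} (hι : Function.Injective ι) :
    LipschitzWith 1 (proj ι) := by
  apply LipschitzWith.of_dist_le_mul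
  intro x y
  rw [NNReal.coe_one, one_mul, dist_eq_norm, dist_eq_norm]
  have : proj ι x - proj ι y = proj ι (x - y) := by
    ext j
    rfl
  rw [this]
  exact norm_proj_le hι _

/-- Lebesgue lower bound for Hausdorff measure on Euclidean space. -/
lemma volume_le_hausdorff {n : ℕ} (hn : 1 ≤ n) (s : Set (Euc n)) :
    MeasureTheory.volume ((WithLp.equiv 2 (Fin n → ℝ)) '' s) ≤ μH[(n : ℝ)] s := by
  have hlip : LipschitzWith 1 (WithLp.equiv 2 (Fin n → ℝ)) := PiLp.lipschitzWith_ofLp 2 _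
  haveI : Nonempty (Fin n) := ⟨⟨0, hn⟩⟩
  calc MeasureTheory.volume ((WithLp.equiv 2 (Fin n → ℝ)) '' s)
      = μH[((Fintype.card (Fin n) : ℕ) : ℝ)] ((WithLp.equiv 2 (Fin n → ℝ)) '' s) := by
        rw [MeasureTheory.hausdorffMeasure_pi_real]
    _ = μH[(n : ℝ)] ((WithLp.equiv 2 (Fin n → ℝ)) '' s) := by norm_num
    _ ≤ (1 : ℝ≥0) ^ (n : ℝ) * μH[(n : ℝ)] s :=
        hlip.hausdorffMeasure_image_le (Nat.cast_nonneg n) s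
    _ = μH[(n : ℝ)] s := by simp

end RLB
namespace RLB
open Real

lemma norm_eq_one_of_sum_sq {n : ℕ} {x : Euc n} (h : ∑ i, (x i) ^ 2 = 1) : ‖x‖ = 1 := by
  have h2 := norm_sq_eq x
  nlinarith [norm_nonneg x]

lemma pi_ball_subset {n : ℕ} (hn : 1 ≤ n) {s : ℝ} (hs : 0 < s) (v : Fin n → ℝ)
    (hv : ‖v‖ < s / Real.sqrt n) :
    ‖(WithLp.equiv 2 (Fin n → ℝ)).symm v‖ < s := by
  have hd0 : (0:ℝ) < Real.sqrt n := Real.sqrt_pos.2 (by exact_mod_cast hn)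
  have hvn : 0 ≤ ‖v‖ := norm_nonneg v
  have h1 : ∀ i, |v i| ≤ ‖v‖ := fun i => by
    simpa [Real.norm_eq_abs] using norm_le_pi_norm v i
  have h2 : ‖(WithLp.equiv 2 (Fin n → ℝ)).symm v‖ ^ 2 ≤ n * ‖v‖ ^ 2 := by
    rw [norm_sq_eq]
    calc ∑ i, ((WithLp.equiv 2 (Fin n → ℝ)).symm v i) ^ 2 = ∑ i : Fin n, (v i) ^ 2 := rfl
      _ ≤ ∑ _i : Fin n, ‖v‖ ^ 2 := Finset.sum_le_sum (fun i _ => by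
          have h := pow_le_pow_left₀ (abs_nonneg (v i)) (h1 i) 2
          rwa [sq_abs] at h)
      _ = n * ‖v‖ ^ 2 := by rw [Finset.sum_const]; simp [mul_comm]
  have h3 : ‖v‖ * Real.sqrt n < s := by
    rw [div_eq_inv_mul] at hv
    calc ‖v‖ * Real.sqrt n < (Real.sqrt n)⁻¹ * s * Real.sqrt n := by
          rw [mul_comm ((Real.sqrt n)⁻¹) s] at hv ⊢
          exact mul_lt_mul_of_pos_right hv hd0
      _ = s := by field_simp
  have h4 : (n : ℝ) * ‖v‖ ^ 2 = (‖v‖ * Real.sqrt n)^2 := by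
    rw [mul_pow, Real.sq_sqrt (by positivity : (0:ℝ) ≤ (n:ℝ))]
    ring
  have h5 : (‖v‖ * Real.sqrt n) ^ 2 < s ^ 2 := by
    nlinarith [mul_nonneg hvn hd0.le]
  nlinarith [norm_nonneg ((WithLp.equiv 2 (Fin n → ℝ)).symm v)]

lemma cap_measure_pos (hd : 1 ≤ d) {r : ℝ} (hr0 : 0 < r) (hrπ : r ≤ π / 2) :
    0 < sphMeasure d (gball (npole d) r) := by
  have hrpi : r ≤ π := hrπ.trans (by linarith [Real.pi_pos])
  set s := Real.sin r with hsdef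
  have hs : 0 < s := Real.sin_pos_of_pos_of_lt_pi hr0 (lt_of_le_of_lt hrπ (by linarith [Real.pi_pos]))
  have hcos : 0 ≤ Real.cos r := Real.cos_nonneg_of_mem_Icc ⟨by linarith, hrπ⟩
  -- the euclidean ball of radius s in Euc d lifts into the cap
  set Y : Set (Euc d) := Metric.ball 0 s with hY
  have hsub : Y ⊆ proj Fin.succ '' (Subtype.val '' gball (npole d) r) := by
    intro y hy
    rw [hY, Metric.mem_ball, dist_zero_right] at hy
    have hy1 : ‖y‖ ^ 2 < s ^ 2 := by nlinarith [norm_nonneg y]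
    have hy1' : ‖y‖ ^ 2 ≤ 1 := by nlinarith [Real.sin_le_one r, norm_nonneg y, hs]
    set s' := Real.sqrt (1 - ‖y‖ ^ 2) with hs'
    have hs'0 : 0 ≤ s' := Real.sqrt_nonneg _
    have hs'sq : s' ^ 2 = 1 - ‖y‖ ^ 2 := Real.sq_sqrt (by linarith)
    set xE : Euc (d + 1) := (WithLp.equiv 2 (Fin (d + 1) → ℝ)).symm
      (Fin.cons s' (fun j => y j)) with hxE
    have hx0 : xE 0 = s' := rfl
    have hxsucc : ∀ j : Fin d, xE j.succ = y j := fun j => rfl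
    have hxsum : ∑ i, (xE i) ^ 2 = 1 := by
      rw [Fin.sum_univ_succ, hx0]
      have : ∑ j : Fin d, (xE j.succ) ^ 2 = ∑ j, (y j) ^ 2 := by
        congr 1
      rw [this, ← norm_sq_eq, hs'sq]
      ring
    have hxnorm : ‖xE‖ = 1 := norm_eq_one_of_sum_sq hxsum
    set η : Sph d := ⟨xE, by rw [mem_sphere_zero_iff_norm]; exact hxnorm⟩ with hη
    refine ⟨(η : Euc (d + 1)), ⟨η, ?_, rfl⟩, ?_⟩
    · show geodist (npole d) η < r
      rw [show geodist (npole d) η = Real.arccos ⟪((npole d) : Euc (d+1)), (η : Euc (d+1))⟫ from rfl]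
      rw [show Real.arccos ⟪((npole d) : Euc (d+1)), (η : Euc (d+1))⟫ = geodist (npole d) η from rfl]
      rw [geodist_lt_iff hr0.le hrpi]
      have : ⟪((npole d) : Euc (d + 1)), (η : Euc (d + 1))⟫ = s' := by
        rw [real_inner_comm, inner_npole]
        exact hx0
      rw [this, hs']
      rw [show Real.cos r = Real.sqrt ((Real.cos r) ^ 2) from
        (Real.sqrt_sq hcos).symm]
      apply Real.sqrt_lt_sqrt (sq_nonneg _)
      have hsc : (Real.cos r) ^ 2 = 1 - s ^ 2 := by
        have := Real.sin_sq_add_cos_sq r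
        rw [hsdef]; linarith
      rw [hsc]; linarith
    · ext j
      exact hxsucc j
  have key : MeasureTheory.volume ((WithLp.equiv 2 (Fin d → ℝ)) '' Y) ≤
      sphMeasure d (gball (npole d) r) := by
    calc MeasureTheory.volume ((WithLp.equiv 2 (Fin d → ℝ)) '' Y)
        ≤ μH[(d : ℝ)] Y := volume_le_hausdorff hd Y
      _ ≤ μH[(d : ℝ)] (proj Fin.succ '' (Subtype.val '' gball (npole d) r)) :=
          measure_mono hsub
      _ ≤ (1 : ℝ≥0) ^ (d : ℝ) * μH[(d : ℝ)] (Subtype.val '' gball (npole d) r) :=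
          (proj_lipschitz (Fin.succ_injective d)).hausdorffMeasure_image_le
            (Nat.cast_nonneg d) _
      _ = sphMeasure d (gball (npole d) r) := by
          rw [sphMeasure_apply]; simp
  have hball : MeasureTheory.volume ((WithLp.equiv 2 (Fin d → ℝ)) '' Y) > 0 := by
    have hsub2 : Metric.ball (0 : Fin d → ℝ) (s / Real.sqrt d) ⊆
        (WithLp.equiv 2 (Fin d → ℝ)) '' Y := by
      intro v hv
      rw [Metric.mem_ball, dist_zero_right] at hv
      refine ⟨(WithLp.equiv 2 (Fin d → ℝ)).symm v, ?_, by simp⟩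
      rw [hY, Metric.mem_ball, dist_zero_right]
      exact pi_ball_subset hd hs v hv
    refine lt_of_lt_of_le ?_ (measure_mono hsub2)
    apply Metric.measure_ball_pos
    have : (0:ℝ) < Real.sqrt d := Real.sqrt_pos.2 (by exact_mod_cast hd)
    positivity
  exact lt_of_lt_of_le hball key

end RLB
namespace RLB
open Real

lemma strip_measure_lower (hd : 1 ≤ d) {κ : ℝ} (hκ0 : 0 < κ) (hκ1 : κ ≤ 1) :
    ∃ c : ℝ, 0 < c ∧ ∀ s₀ w : ℝ, |s₀| ≤ 1 - κ → 0 < w → w ≤ κ / 4 →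
      ENNReal.ofReal (c * w) ≤ sphMeasure d {η : Sph d | |T η - s₀| ≤ w} := by
  have hd0 : (0:ℝ) < d := by exact_mod_cast hd
  set b := Real.sqrt (κ / (2 * d)) with hbdef
  have hb : 0 < b := Real.sqrt_pos.2 (by positivity)
  have hbsq : b ^ 2 = κ / (2 * d) := Real.sq_sqrt (by positivity)
  refine ⟨2 * (2 * b) ^ (d - 1), by positivity, ?_⟩
  intro s₀ w hs₀ hw hw4
  set z0 : Fin d := ⟨0, hd⟩ with hz0
  set Bx : Set (Fin d → ℝ) := Set.pi Set.univ
    (fun j => if j = z0 then Set.Ioo (s₀ - w) (s₀ + w) else Set.Ioo (-b) b) with hBx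
  -- membership facts
  have hmem : ∀ v ∈ Bx, |v z0 - s₀| < w ∧ ∑ i, (v i) ^ 2 < 1 := by
    intro v hv
    have h0 : v z0 ∈ Set.Ioo (s₀ - w) (s₀ + w) := by
      have := hv z0 (Set.mem_univ _)
      simpa using this
    have habs : |v z0 - s₀| < w := by
      rw [abs_lt]; constructor <;> [linarith [h0.1]; linarith [h0.2]]
    refine ⟨habs, ?_⟩
    have hj : ∀ j, j ≠ z0 → |v j| < b := by
      intro j hjne
      have := hv j (Set.mem_univ _)
      simp only [if_neg hjne, Set.mem_Ioo] at this
      rw [abs_lt]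
      exact this
    have hsum : ∑ i, (v i) ^ 2 = (v z0) ^ 2 + ∑ j ∈ Finset.univ.erase z0, (v j) ^ 2 := by
      rw [← Finset.add_sum_erase Finset.univ _ (Finset.mem_univ z0)]
    have hb1 : ∑ j ∈ Finset.univ.erase z0, (v j) ^ 2 ≤ ((d - 1 : ℕ) : ℝ) * b ^ 2 := by
      have hcard : (Finset.univ.erase z0).card = d - 1 := by
        rw [Finset.card_erase_of_mem (Finset.mem_univ z0), Finset.card_univ, Fintype.card_fin]
      calc ∑ j ∈ Finset.univ.erase z0, (v j) ^ 2
          ≤ ∑ _j ∈ Finset.univ.erase z0, b ^ 2 := by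
            apply Finset.sum_le_sum
            intro j hjmem
            have hjb := hj j (Finset.ne_of_mem_erase hjmem)
            nlinarith [abs_nonneg (v j), neg_abs_le (v j), le_abs_self (v j)]
        _ = ((d - 1 : ℕ) : ℝ) * b ^ 2 := by rw [Finset.sum_const, hcard, nsmul_eq_mul]
    have hdc : ((d - 1 : ℕ) : ℝ) * b ^ 2 ≤ κ / 2 := by
      have h1 : ((d - 1 : ℕ) : ℝ) ≤ (d : ℝ) := by exact_mod_cast Nat.sub_le d 1
      rw [hbsq]
      calc ((d - 1 : ℕ) : ℝ) * (κ / (2 * d)) ≤ (d : ℝ) * (κ / (2 * d)) :=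
            mul_le_mul_of_nonneg_right h1 (by positivity)
        _ = κ / 2 := by field_simp
    have hz0b : |v z0| ≤ 1 - 3 * κ / 4 := by
      have h1 : |v z0| ≤ |s₀| + |v z0 - s₀| := by
        calc |v z0| = |s₀ + (v z0 - s₀)| := by ring_nf
          _ ≤ |s₀| + |v z0 - s₀| := abs_add_le _ _
      linarith [habs.le]
    have hz0sq : (v z0) ^ 2 ≤ (1 - 3 * κ / 4) ^ 2 := by
      nlinarith [abs_nonneg (v z0), neg_abs_le (v z0), le_abs_self (v z0)]
    rw [hsum]
    nlinarith
  -- the lift into the strip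
  have hsub : (WithLp.equiv 2 (Fin d → ℝ)) ⁻¹' Bx ⊆
      proj Fin.castSucc '' (Subtype.val '' {η : Sph d | |T η - s₀| ≤ w}) := by
    intro y hy
    have hyB : (fun i => y i) ∈ Bx := hy
    obtain ⟨h1, h2⟩ := hmem _ hyB
    have hynorm : ‖y‖ ^ 2 < 1 := by rw [norm_sq_eq]; exact h2
    set s' := Real.sqrt (1 - ‖y‖ ^ 2) with hs'
    have hs'sq : s' ^ 2 = 1 - ‖y‖ ^ 2 := Real.sq_sqrt (by linarith)
    set xE : Euc (d + 1) := (WithLp.equiv 2 (Fin (d + 1) → ℝ)).symm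
      (Fin.snoc (fun j => y j) s') with hxE
    have hxc : ∀ j : Fin d, xE j.castSucc = y j := by
      intro j
      show (Fin.snoc (fun j => y j) s' : Fin (d+1) → ℝ) j.castSucc = y j
      rw [Fin.snoc_castSucc]
    have hxl : xE (Fin.last d) = s' := by
      show (Fin.snoc (fun j => y j) s' : Fin (d+1) → ℝ) (Fin.last d) = s'
      rw [Fin.snoc_last]
    have hxsum : ∑ i, (xE i) ^ 2 = 1 := by
      rw [Fin.sum_univ_castSucc]
      have he : ∑ j : Fin d, (xE j.castSucc) ^ 2 = ∑ j, (y j) ^ 2 := by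
        apply Finset.sum_congr rfl
        intro j _
        rw [hxc j]
      rw [he, hxl, ← norm_sq_eq, hs'sq]
      ring
    have hxnorm : ‖xE‖ = 1 := norm_eq_one_of_sum_sq hxsum
    set η : Sph d := ⟨xE, by rw [mem_sphere_zero_iff_norm]; exact hxnorm⟩ with hη
    refine ⟨(η : Euc (d + 1)), ⟨η, ?_, rfl⟩, ?_⟩
    · show |T η - s₀| ≤ w
      have hT : T η = y z0 := by
        show xE 0 = y z0
        have h0 : (0 : Fin (d + 1)) = (z0 : Fin d).castSucc := by
          apply Fin.ext
          simp [hz0]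
        rw [h0, hxc]
      rw [hT]
      exact h1.le
    · ext j
      show xE j.castSucc = y j
      exact hxc j
  -- volume of the box
  have hvol : MeasureTheory.volume Bx =
      ENNReal.ofReal (2 * w) * ENNReal.ofReal (2 * b) ^ (d - 1) := by
    rw [hBx, MeasureTheory.volume_pi_pi]
    rw [← Finset.mul_prod_erase Finset.univ _ (Finset.mem_univ z0)]
    rw [if_pos rfl]
    have h1 : MeasureTheory.volume (Set.Ioo (s₀ - w) (s₀ + w)) = ENNReal.ofReal (2 * w) := by
      rw [Real.volume_Ioo]
      congr 1
      ring
    have h2 : ∀ j ∈ Finset.univ.erase z0,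
        MeasureTheory.volume (if j = z0 then Set.Ioo (s₀ - w) (s₀ + w) else Set.Ioo (-b) b)
          = ENNReal.ofReal (2 * b) := by
      intro j hj
      rw [if_neg (Finset.ne_of_mem_erase hj), Real.volume_Ioo]
      congr 1
      ring
    rw [h1, Finset.prod_congr rfl h2, Finset.prod_const,
      Finset.card_erase_of_mem (Finset.mem_univ z0), Finset.card_univ, Fintype.card_fin]
  -- put everything together
  have hchain : MeasureTheory.volume Bx ≤ sphMeasure d {η : Sph d | |T η - s₀| ≤ w} := by
    have himg : (WithLp.equiv 2 (Fin d → ℝ)) ''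
        ((WithLp.equiv 2 (Fin d → ℝ)) ⁻¹' Bx) = Bx :=
      Set.image_preimage_eq Bx (WithLp.equiv 2 (Fin d → ℝ)).surjective
    calc MeasureTheory.volume Bx
        = MeasureTheory.volume ((WithLp.equiv 2 (Fin d → ℝ)) ''
            ((WithLp.equiv 2 (Fin d → ℝ)) ⁻¹' Bx)) := by rw [himg]
      _ ≤ μH[(d : ℝ)] ((WithLp.equiv 2 (Fin d → ℝ)) ⁻¹' Bx) := volume_le_hausdorff hd _
      _ ≤ μH[(d : ℝ)] (proj Fin.castSucc ''
            (Subtype.val '' {η : Sph d | |T η - s₀| ≤ w})) := measure_mono hsub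
      _ ≤ (1 : ℝ≥0) ^ (d : ℝ) *
            μH[(d : ℝ)] (Subtype.val '' {η : Sph d | |T η - s₀| ≤ w}) :=
          (proj_lipschitz (Fin.castSucc_injective d)).hausdorffMeasure_image_le
            (Nat.cast_nonneg d) _
      _ = sphMeasure d {η : Sph d | |T η - s₀| ≤ w} := by rw [sphMeasure_apply]; simp
  refine le_trans ?_ hchain
  rw [hvol]
  have e1 : 2 * (2 * b) ^ (d - 1) * w = (2 * w) * (2 * b) ^ (d - 1) := by ring
  rw [e1, ENNReal.ofReal_mul (by positivity), ENNReal.ofReal_pow (by positivity)]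

end RLB
namespace RLB
open Real MeasureTheory

lemma integrable_bdd_smul {α : Type*} [MeasurableSpace α] {μ : Measure α}
    {V : Type*} [NormedAddCommGroup V] [NormedSpace ℝ V] {G : α → V} (hG : Integrable G μ)
    {φ : α → ℝ} (hφ : AEStronglyMeasurable φ μ) {C : ℝ} (hC : ∀ x, |φ x| ≤ C) :
    Integrable (fun x => φ x • G x) μ := by
  apply Integrable.mono' (hG.norm.const_mul C)
  · exact hφ.smul hG.aestronglyMeasurable
  · filter_upwards with x
    rw [norm_smul, Real.norm_eq_abs]
    exact mul_le_mul_of_nonneg_right (hC x) (norm_nonneg _)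

lemma integrable_smul_bdd {α : Type*} [MeasurableSpace α] {μ : Measure α}
    {V : Type*} [NormedAddCommGroup V] [NormedSpace ℝ V] {u : α → ℝ} (hu : Integrable u μ)
    {v : α → V} (hv : AEStronglyMeasurable v μ) {C : ℝ} (hC : ∀ x, ‖v x‖ ≤ C) :
    Integrable (fun x => u x • v x) μ := by
  apply Integrable.mono' (hu.norm.mul_const C)
  · exact hu.aestronglyMeasurable.smul hv
  · filter_upwards with x
    rw [norm_smul, Real.norm_eq_abs]
    exact mul_le_mul_of_nonneg_left (hC x) (abs_nonneg _)

lemma gradient_comp_coord {h : ℝ → ℝ} (hh : ContDiff ℝ (⊤ : ℕ∞) h) (x : Euc (d + 1)) :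
    gradient (fun y : Euc (d + 1) => h (y 0)) x
      = deriv h (x 0) • EuclideanSpace.single 0 1 := by
  have hdiff : HasDerivAt h (deriv h (x 0)) (x 0) :=
    ((hh.differentiable (by simp)) (x 0)).hasDerivAt
  have hl : HasFDerivAt (fun y : Euc (d + 1) => y 0)
      (EuclideanSpace.proj (0 : Fin (d + 1)) : Euc (d + 1) →L[ℝ] ℝ) x := by
    have := (EuclideanSpace.proj (0 : Fin (d + 1)) : Euc (d + 1) →L[ℝ] ℝ).hasFDerivAt (x := x)
    exact this
  have hφ : HasFDerivAt (fun y : Euc (d + 1) => h (y 0))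
      (deriv h (x 0) • (EuclideanSpace.proj (0 : Fin (d + 1)) : Euc (d + 1) →L[ℝ] ℝ)) x :=
    hdiff.comp_hasFDerivAt x hl
  have hfd := hφ.fderiv
  rw [gradient, hfd]
  have heq : (deriv h (x 0) • (EuclideanSpace.proj (0 : Fin (d + 1)) : Euc (d + 1) →L[ℝ] ℝ))
      = (InnerProductSpace.toDual ℝ (Euc (d + 1)))
          (deriv h (x 0) • EuclideanSpace.single 0 1) := by
    apply ContinuousLinearMap.ext
    intro w
    rw [InnerProductSpace.toDual_apply_apply]
    simp only [ContinuousLinearMap.smul_apply]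
    rw [real_inner_smul_left]
    rw [show ⟪(EuclideanSpace.single 0 1 : Euc (d+1)), w⟫ = w 0 by
      rw [EuclideanSpace.inner_single_left]; simp]
    rfl
  rw [heq, LinearIsometryEquiv.symm_apply_apply]

lemma inner_tangProj_coord (η : Sph d) (c : ℝ) :
    ⟪tangProj η (c • (EuclideanSpace.single 0 1 : Euc (d + 1))),
      ((npole d) : Euc (d + 1))⟫ = c * (1 - (T η) ^ 2) := by
  rw [tangProj, inner_sub_left, real_inner_smul_left, real_inner_smul_left,
    inner_npole, inner_npole]
  have h1 : (EuclideanSpace.single 0 1 : Euc (d + 1)) 0 = 1 := by simp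
  have h2 : ⟪(c • (EuclideanSpace.single 0 1 : Euc (d + 1)) : Euc (d+1)),
      (η : Euc (d + 1))⟫ = c * T η := by
    rw [real_inner_smul_left, EuclideanSpace.inner_single_left]
    simp [T]
  rw [h1, h2]
  show c * 1 - c * T η * T η = c * (1 - T η ^ 2)
  ring

lemma norm_tangProj_le (η : Sph d) (v : Euc (d + 1)) : ‖tangProj η v‖ ≤ 2 * ‖v‖ := by
  rw [tangProj]
  calc ‖v - ⟪v, (η : Euc (d+1))⟫ • (η : Euc (d+1))‖
      ≤ ‖v‖ + ‖⟪v, (η : Euc (d+1))⟫ • (η : Euc (d+1))‖ := norm_sub_le _ _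
    _ ≤ ‖v‖ + ‖v‖ := by
        gcongr
        rw [norm_smul, Real.norm_eq_abs, norm_coe, mul_one]
        calc |⟪v, (η : Euc (d+1))⟫| ≤ ‖v‖ * ‖(η : Euc (d+1))‖ := abs_real_inner_le_norm _ _
          _ = ‖v‖ := by rw [norm_coe, mul_one]
    _ = 2 * ‖v‖ := by ring

/-- The fundamental 1-D identity obtained from the weak gradient by testing against
`φ(x) = h(x 0)`. -/
lemma weak_grad_identity {u : Sph d → ℝ} {G : Sph d → Euc (d + 1)}
    (hu : MemW11 u G) {h : ℝ → ℝ} (hh : ContDiff ℝ (⊤ : ℕ∞) h)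
    {A B : ℝ} (hA : ∀ s, |h s| ≤ A) (hB : ∀ s, |deriv h s| ≤ B) :
    ∫ η, h (T η) * ⟪G η, ((npole d) : Euc (d + 1))⟫ ∂(sphMeasure d)
      = - ∫ η, u η * (deriv h (T η) * (1 - (T η) ^ 2)) ∂(sphMeasure d)
        + (d : ℝ) * ∫ η, u η * h (T η) * T η ∂(sphMeasure d) := by
  obtain ⟨huI, hGI, htang, hident⟩ := hu
  set e : Euc (d + 1) := ((npole d) : Euc (d + 1)) with he
  set φ : Euc (d + 1) → ℝ := fun y => h (y 0) with hφdef
  have hφc : ContDiff ℝ (⊤ : ℕ∞) φ := hh.comp (EuclideanSpace.proj (0 : Fin (d + 1)) : Euc (d + 1) →L[ℝ] ℝ).contDiff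
  have hid := hident φ hφc
  set w : Sph d → Euc (d + 1) :=
    fun η => tangProj η (deriv h (T η) • EuclideanSpace.single 0 1) with hwdef
  have hgr : (fun η : Sph d => u η • tangProj η (gradient φ ((η : Euc (d + 1)))))
      = fun η => u η • w η := by
    funext η
    rw [hwdef]
    simp only
    rw [gradient_comp_coord hh]
    rfl
  rw [hgr] at hid
  -- continuity facts
  have hcont_hT : Continuous fun η : Sph d => h (T η) := hh.continuous.comp continuous_T
  have hcont_dT : Continuous fun η : Sph d => deriv h (T η) :=
    ((contDiff_infty_iff_deriv.mp (hh.of_le (mod_cast le_top))).2.continuous).comp continuous_T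
  have hcont_w : Continuous w := by
    rw [hwdef]
    simp only [tangProj]
    apply Continuous.sub
    · exact hcont_dT.smul continuous_const
    · apply Continuous.fun_smul
      · exact Continuous.inner (hcont_dT.smul continuous_const) continuous_subtype_val
      · exact continuous_subtype_val
  -- integrability of the three integrands
  have hI1 : Integrable (fun η : Sph d => φ ((η : Euc (d + 1))) • G η) (sphMeasure d) :=
    integrable_bdd_smul hGI (hcont_hT.aestronglyMeasurable) (fun η => hA (T η))
  have hI2 : Integrable (fun η : Sph d => u η • w η) (sphMeasure d) := by
    apply integrable_smul_bdd huI hcont_w.aestronglyMeasurable (C := 2 * B)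
    intro η
    rw [hwdef]
    calc ‖tangProj η (deriv h (T η) • EuclideanSpace.single 0 1)‖
        ≤ 2 * ‖deriv h (T η) • (EuclideanSpace.single 0 1 : Euc (d+1))‖ :=
          norm_tangProj_le _ _
      _ ≤ 2 * B := by
          rw [norm_smul, Real.norm_eq_abs, EuclideanSpace.norm_single]
          norm_num
          linarith [hB (T η)]
  have hI3 : Integrable (fun η : Sph d => (u η * φ ((η : Euc (d + 1)))) • (η : Euc (d + 1)))
      (sphMeasure d) := by
    have : (fun η : Sph d => (u η * φ ((η : Euc (d + 1)))) • (η : Euc (d + 1)))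
        = fun η : Sph d => u η • (h (T η) • (η : Euc (d + 1))) := by
      funext η
      rw [mul_smul]
      rfl
    rw [this]
    apply integrable_smul_bdd huI
      ((hcont_hT.smul continuous_subtype_val).aestronglyMeasurable) (C := A)
    intro η
    rw [Pi.smul_apply', norm_smul, Real.norm_eq_abs, norm_coe, mul_one]
    exact hA (T η)
  -- pair the vector identity with e
  have hpair := congrArg (fun z => ⟪e, z⟫) hid
  simp only [inner_add_right, inner_neg_right, real_inner_smul_right] at hpair
  rw [← integral_inner hI1 e, ← integral_inner hI2 e, ← integral_inner hI3 e] at hpair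
  have e1 : ∀ η : Sph d, ⟪e, φ ((η : Euc (d + 1))) • G η⟫ = h (T η) * ⟪G η, e⟫ := by
    intro η
    rw [real_inner_smul_right, real_inner_comm]
    rfl
  have e2 : ∀ η : Sph d, ⟪e, u η • w η⟫ = u η * (deriv h (T η) * (1 - (T η) ^ 2)) := by
    intro η
    rw [real_inner_smul_right, real_inner_comm]
    rw [hwdef]
    simp only
    rw [inner_tangProj_coord]
  have e3 : ∀ η : Sph d, ⟪e, (u η * φ ((η : Euc (d + 1)))) • (η : Euc (d + 1))⟫
      = u η * h (T η) * T η := by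
    intro η
    rw [real_inner_smul_right, real_inner_comm, inner_npole]
    show (u η * h (T η)) * T η = u η * h (T η) * T η
    ring
  rw [show (fun η : Sph d => ⟪e, φ ((η : Euc (d + 1))) • G η⟫)
      = fun η => h (T η) * ⟪G η, e⟫ from funext e1] at hpair
  rw [show (fun η : Sph d => ⟪e, u η • w η⟫)
      = fun η => u η * (deriv h (T η) * (1 - (T η) ^ 2)) from funext e2] at hpair
  rw [show (fun η : Sph d => ⟪e, (u η * φ ((η : Euc (d + 1)))) • (η : Euc (d + 1))⟫)
      = fun η => u η * h (T η) * T η from funext e3] at hpair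
  exact hpair

end RLB
namespace RLB
open Real MeasureTheory

lemma abs_integral_le {α : Type*} [MeasurableSpace α] {μ : Measure α} (f : α → ℝ) :
    |∫ x, f x ∂μ| ≤ ∫ x, |f x| ∂μ := by
  rw [← Real.norm_eq_abs]
  refine (norm_integral_le_integral_norm f).trans_eq ?_
  simp [Real.norm_eq_abs]

lemma integrable_mul_bdd {α : Type*} [MeasurableSpace α] {μ : Measure α}
    {u : α → ℝ} (hu : Integrable u μ) {ψ : α → ℝ} (hψ : AEStronglyMeasurable ψ μ)
    {C : ℝ} (hC : ∀ x, |ψ x| ≤ C) : Integrable (fun x => u x * ψ x) μ := by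
  have := integrable_smul_bdd (V := ℝ) hu hψ (C := C) (fun x => by
    rw [Real.norm_eq_abs]; exact hC x)
  simpa [smul_eq_mul] using this

/-- Analytic approximations to a ramp function: `h = 2δ·arctan((s-m)/δ)`. -/
lemma exists_test_fun (m δ : ℝ) (hδ : 0 < δ) :
    ∃ h : ℝ → ℝ, ContDiff ℝ (⊤ : ℕ∞) h ∧ (∀ s, |h s| ≤ π * δ) ∧
      (∀ s, 0 ≤ deriv h s ∧ deriv h s ≤ 2) ∧
      (∀ s, |s - m| ≤ δ → 1 ≤ deriv h s) := by
  set h : ℝ → ℝ := fun s => (2 * δ) * Real.arctan ((s - m) / δ) with hh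
  have hder : ∀ s, HasDerivAt h (2 / (1 + ((s - m) / δ) ^ 2)) s := by
    intro s
    have h1 : HasDerivAt (fun s : ℝ => (s - m) / δ) (1 / δ) s := by
      simpa using ((hasDerivAt_id s).sub_const m).div_const δ
    have h2 := (Real.hasDerivAt_arctan ((s - m) / δ)).comp s h1
    have h3 := h2.const_mul (2 * δ)
    refine h3.congr_deriv ?_
    field_simp
  have hderiv : ∀ s, deriv h s = 2 / (1 + ((s - m) / δ) ^ 2) := fun s => (hder s).deriv
  refine ⟨h, ?_, ?_, ?_, ?_⟩
  · apply ContDiff.mul contDiff_const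
    exact Real.contDiff_arctan.comp ((contDiff_id.sub contDiff_const).div_const δ)
  · intro s
    rw [hh]
    simp only
    rw [abs_mul, abs_of_pos (by linarith : (0:ℝ) < 2 * δ)]
    have hio := Real.arctan_mem_Ioo ((s - m) / δ)
    have habs : |Real.arctan ((s - m) / δ)| ≤ π / 2 := by
      rw [abs_le]
      constructor <;> [linarith [hio.1]; linarith [hio.2]]
    calc (2 * δ) * |Real.arctan ((s - m) / δ)| ≤ (2 * δ) * (π / 2) := by
          apply mul_le_mul_of_nonneg_left habs (by linarith)
      _ = π * δ := by ring
  · intro s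
    rw [hderiv]
    constructor
    · positivity
    · rw [div_le_iff₀ (by positivity)]
      nlinarith [sq_nonneg ((s - m) / δ)]
  · intro s hs
    rw [hderiv, le_div_iff₀ (by positivity)]
    have h1 : ((s - m) / δ) ^ 2 ≤ 1 := by
      rw [div_pow, div_le_one (by positivity)]
      nlinarith [sq_abs (s - m), abs_nonneg (s - m)]
    linarith

/-- The key strip-mass bound coming from the weak-gradient identity. -/
lemma strip_integral_bound {u : Sph d → ℝ} {G : Sph d → Euc (d + 1)}
    (hu : MemW11 u G) (hnn : ∀ ξ, 0 ≤ u ξ) (a b : ℝ) (hab : a ≤ b) {ε : ℝ} (hε : 0 < ε) :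
    ∫ η in {η : Sph d | a ≤ T η ∧ T η ≤ b}, u η * (1 - (T η) ^ 2) ∂(sphMeasure d)
      ≤ (π * ((b - a) / 2 + ε)) *
        ((d : ℝ) * ∫ η, u η ∂(sphMeasure d) + ∫ η, ‖G η‖ ∂(sphMeasure d)) := by
  obtain ⟨h, hhC, hhA, hhB, hh1⟩ := exists_test_fun ((a + b) / 2) ((b - a) / 2 + ε)
    (by linarith)
  set A := π * ((b - a) / 2 + ε) with hAdef
  have hA0 : 0 < A := by
    rw [hAdef]
    apply mul_pos Real.pi_pos (by linarith)
  have hid := weak_grad_identity hu hhC (A := A) (B := 2) hhA (fun s => by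
    rw [abs_le]; exact ⟨by linarith [(hhB s).1], (hhB s).2⟩)
  obtain ⟨huI, hGI, -⟩ := hu
  have habsT : ∀ η : Sph d, 0 ≤ 1 - (T η) ^ 2 := by
    intro η
    nlinarith [sq_abs (T η), abs_nonneg (T η), abs_T_le_one η]
  have hTle : ∀ η : Sph d, |1 - (T η) ^ 2| ≤ 1 := by
    intro η
    rw [abs_of_nonneg (habsT η)]
    nlinarith [sq_abs (T η), abs_nonneg (T η), abs_T_le_one η]
  have hcont_hT : Continuous fun η : Sph d => h (T η) := hhC.continuous.comp continuous_T
  have hcont_dT : Continuous fun η : Sph d => deriv h (T η) :=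
    ((contDiff_infty_iff_deriv.mp (hhC.of_le (mod_cast le_top))).2.continuous).comp continuous_T
  have hcont_sq : Continuous fun η : Sph d => 1 - (T η) ^ 2 :=
    continuous_const.sub ((continuous_pow 2).comp continuous_T)
  -- integrability facts
  have hIf : Integrable (fun η : Sph d => u η * (deriv h (T η) * (1 - (T η) ^ 2)))
      (sphMeasure d) := by
    apply integrable_mul_bdd huI ((hcont_dT.mul hcont_sq).aestronglyMeasurable) (C := 2)
    intro η
    rw [Pi.mul_apply, abs_mul, abs_of_nonneg (hhB (T η)).1]
    calc deriv h (T η) * |1 - T η ^ 2| ≤ 2 * 1 :=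
          mul_le_mul (hhB (T η)).2 (hTle η) (abs_nonneg _) (by norm_num)
      _ = 2 := by norm_num
  have hIty : Integrable (fun η : Sph d => u η * (1 - (T η) ^ 2)) (sphMeasure d) := by
    apply integrable_mul_bdd huI hcont_sq.aestronglyMeasurable (C := 1)
    exact hTle
  have hIuh : Integrable (fun η : Sph d => u η * h (T η) * T η) (sphMeasure d) := by
    have : (fun η : Sph d => u η * h (T η) * T η)
        = fun η : Sph d => u η * (h (T η) * T η) := by funext η; ring
    rw [this]
    apply integrable_mul_bdd huI ((hcont_hT.mul continuous_T).aestronglyMeasurable) (C := A)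
    intro η
    rw [Pi.mul_apply, abs_mul]
    calc |h (T η)| * |T η| ≤ A * 1 :=
          mul_le_mul (hhA _) (abs_T_le_one η) (abs_nonneg _) hA0.le
      _ = A := by norm_num
  have hIg : Integrable (fun η : Sph d => h (T η) * ⟪G η, ((npole d) : Euc (d + 1))⟫)
      (sphMeasure d) := by
    have hGinner : Integrable (fun η : Sph d => ⟪G η, ((npole d) : Euc (d + 1))⟫)
        (sphMeasure d) := by
      apply Integrable.mono' hGI.norm
      · exact hGI.aestronglyMeasurable.inner aestronglyMeasurable_const
      · filter_upwards with η
        rw [Real.norm_eq_abs]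
        calc |⟪G η, ((npole d) : Euc (d + 1))⟫| ≤ ‖G η‖ * ‖((npole d) : Euc (d + 1))‖ :=
              abs_real_inner_le_norm _ _
          _ = ‖G η‖ := by rw [norm_coe, mul_one]
    have : (fun η : Sph d => h (T η) * ⟪G η, ((npole d) : Euc (d + 1))⟫)
        = fun η => ⟪G η, ((npole d) : Euc (d + 1))⟫ * h (T η) := by funext η; ring
    rw [this]
    exact integrable_mul_bdd hGinner hcont_hT.aestronglyMeasurable (fun η => hhA (T η))
  -- the strip is a measurable set
  set S : Set (Sph d) := {η : Sph d | a ≤ T η ∧ T η ≤ b} with hSdef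
  have hSm : MeasurableSet S :=
    ((isClosed_le continuous_const continuous_T).inter
      (isClosed_le continuous_T continuous_const)).measurableSet
  -- pointwise comparison on S
  have hstep1 : ∫ η in S, u η * (1 - (T η) ^ 2) ∂(sphMeasure d)
      ≤ ∫ η in S, u η * (deriv h (T η) * (1 - (T η) ^ 2)) ∂(sphMeasure d) := by
    apply setIntegral_mono_on hIty.integrableOn hIf.integrableOn hSm
    intro η hη
    have hd1 : 1 ≤ deriv h (T η) := by
      apply hh1
      rw [abs_le]
      obtain ⟨h1, h2⟩ := hη
      constructor <;> [linarith; linarith]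
    have hu0 := hnn η
    have key : 0 ≤ u η * (1 - T η ^ 2) * (deriv h (T η) - 1) :=
      mul_nonneg (mul_nonneg hu0 (habsT η)) (by linarith)
    nlinarith [key]
  have hstep2 : ∫ η in S, u η * (deriv h (T η) * (1 - (T η) ^ 2)) ∂(sphMeasure d)
      ≤ ∫ η, u η * (deriv h (T η) * (1 - (T η) ^ 2)) ∂(sphMeasure d) := by
    apply setIntegral_le_integral hIf
    filter_upwards with η
    have := hnn η
    have h0 := (hhB (T η)).1
    have := habsT η
    positivity
  have hstep3 : ∫ η, u η * (deriv h (T η) * (1 - (T η) ^ 2)) ∂(sphMeasure d)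
      = (d : ℝ) * ∫ η, u η * h (T η) * T η ∂(sphMeasure d)
        - ∫ η, h (T η) * ⟪G η, ((npole d) : Euc (d + 1))⟫ ∂(sphMeasure d) := by
    linarith [hid]
  have hstep4 : (d : ℝ) * ∫ η, u η * h (T η) * T η ∂(sphMeasure d)
      ≤ (d : ℝ) * (A * ∫ η, u η ∂(sphMeasure d)) := by
    apply mul_le_mul_of_nonneg_left _ (Nat.cast_nonneg d)
    calc ∫ η, u η * h (T η) * T η ∂(sphMeasure d)
        ≤ |∫ η, u η * h (T η) * T η ∂(sphMeasure d)| := le_abs_self _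
      _ ≤ ∫ η, |u η * h (T η) * T η| ∂(sphMeasure d) := (abs_integral_le _)
      _ ≤ ∫ η, A * u η ∂(sphMeasure d) := by
          apply integral_mono hIuh.abs (huI.const_mul A)
          intro η
          simp only
          rw [abs_mul, abs_mul, abs_of_nonneg (hnn η)]
          calc u η * |h (T η)| * |T η| ≤ u η * A * 1 := by
                apply mul_le_mul (mul_le_mul_of_nonneg_left (hhA _) (hnn η))
                  (abs_T_le_one η) (abs_nonneg _) (mul_nonneg (hnn η) hA0.le)
            _ = A * u η := by ring
      _ = A * ∫ η, u η ∂(sphMeasure d) := by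
          rw [← integral_const_mul]
  have hstep5 : - ∫ η, h (T η) * ⟪G η, ((npole d) : Euc (d + 1))⟫ ∂(sphMeasure d)
      ≤ A * ∫ η, ‖G η‖ ∂(sphMeasure d) := by
    calc - ∫ η, h (T η) * ⟪G η, ((npole d) : Euc (d + 1))⟫ ∂(sphMeasure d)
        ≤ |∫ η, h (T η) * ⟪G η, ((npole d) : Euc (d + 1))⟫ ∂(sphMeasure d)| :=
          neg_le_abs _
      _ ≤ ∫ η, |h (T η) * ⟪G η, ((npole d) : Euc (d + 1))⟫| ∂(sphMeasure d) :=
          abs_integral_le _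
      _ ≤ ∫ η, A * ‖G η‖ ∂(sphMeasure d) := by
          apply integral_mono hIg.abs (hGI.norm.const_mul A)
          intro η
          simp only
          rw [abs_mul]
          apply mul_le_mul (hhA _) _ (abs_nonneg _) hA0.le
          calc |⟪G η, ((npole d) : Euc (d + 1))⟫| ≤ ‖G η‖ * ‖((npole d) : Euc (d + 1))‖ :=
                abs_real_inner_le_norm _ _
            _ = ‖G η‖ := by rw [norm_coe, mul_one]
      _ = A * ∫ η, ‖G η‖ ∂(sphMeasure d) := by
          rw [← integral_const_mul]
  calc ∫ η in S, u η * (1 - (T η) ^ 2) ∂(sphMeasure d)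
      ≤ ∫ η, u η * (deriv h (T η) * (1 - (T η) ^ 2)) ∂(sphMeasure d) :=
        hstep1.trans hstep2
    _ = (d : ℝ) * ∫ η, u η * h (T η) * T η ∂(sphMeasure d)
        - ∫ η, h (T η) * ⟪G η, ((npole d) : Euc (d + 1))⟫ ∂(sphMeasure d) := hstep3
    _ ≤ (d : ℝ) * (A * ∫ η, u η ∂(sphMeasure d)) + A * ∫ η, ‖G η‖ ∂(sphMeasure d) := by
        linarith
    _ = A * ((d : ℝ) * ∫ η, u η ∂(sphMeasure d) + ∫ η, ‖G η‖ ∂(sphMeasure d)) := by ring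

end RLB
namespace RLB
open Real MeasureTheory Filter Topology

lemma T_spole : T (spole d) = -1 := by
  show ((spole d : Sph d) : Euc (d + 1)) 0 = -1
  rw [show ((spole d : Sph d) : Euc (d + 1)) = -((npole d) : Euc (d + 1)) from rfl]
  rw [npole_coe]
  simp

lemma isOpen_offpoles : IsOpen {ξ : Sph d | ξ ≠ npole d ∧ ξ ≠ spole d} := by
  have : {ξ : Sph d | ξ ≠ npole d ∧ ξ ≠ spole d}
      = {npole d}ᶜ ∩ {spole d}ᶜ := by
    ext ξ; simp [Set.mem_compl_iff]
  rw [this]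
  exact (isClosed_singleton.isOpen_compl).inter (isClosed_singleton.isOpen_compl)

lemma mem_offpoles {η : Sph d} (h : |T η| < 1) :
    η ∈ {ξ : Sph d | ξ ≠ npole d ∧ ξ ≠ spole d} := by
  constructor
  · intro heq
    rw [heq, T_npole] at h
    simp at h
  · intro heq
    rw [heq, T_spole] at h
    simp at h

set_option maxHeartbeats 1000000 in
/-- Uniform sup bound for nonnegative polar `W^{1,1}` functions away from the poles. -/
lemma sup_bound (hd : 1 ≤ d) {κ : ℝ} (hκ0 : 0 < κ) (hκ1 : κ ≤ 1) :
    ∃ C : ℝ, 0 < C ∧ ∀ u G, MemW11 u G → (∀ ξ : Sph d, 0 ≤ u ξ) → IsPolar u →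
      ContinuousOn u {ξ : Sph d | ξ ≠ npole d ∧ ξ ≠ spole d} →
      ∀ η₀ : Sph d, |T η₀| ≤ 1 - κ →
        u η₀ ≤ C * ((d : ℝ) * ∫ η, u η ∂(sphMeasure d) + ∫ η, ‖G η‖ ∂(sphMeasure d)) := by
  haveI : CompactSpace (Sph d) := Metric.sphere.compactSpace _ _
  obtain ⟨c, hc, hstrip⟩ := strip_measure_lower hd (κ := κ / 2) (by linarith) (by linarith)
  refine ⟨(8 / (7 * κ)) * (π / c), by positivity, ?_⟩
  intro u G hu hnn hpol hcont η₀ hη₀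
  set N := (d : ℝ) * ∫ η, u η ∂(sphMeasure d) + ∫ η, ‖G η‖ ∂(sphMeasure d) with hN
  have hN0 : 0 ≤ N :=
    add_nonneg (mul_nonneg (Nat.cast_nonneg d) (integral_nonneg hnn))
      (integral_nonneg (fun _ => norm_nonneg _))
  set s₀ := T η₀ with hs₀def
  have huI := hu.1
  have hGI := hu.2.1
  -- basic facts about T
  have habsT : ∀ η : Sph d, 0 ≤ 1 - (T η) ^ 2 := by
    intro η
    nlinarith [sq_abs (T η), abs_nonneg (T η), abs_T_le_one η]
  have hTle : ∀ η : Sph d, |1 - (T η) ^ 2| ≤ 1 := by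
    intro η
    rw [abs_of_nonneg (habsT η)]
    nlinarith [sq_abs (T η), abs_nonneg (T η), abs_T_le_one η]
  have hcont_sq : Continuous fun η : Sph d => 1 - (T η) ^ 2 :=
    continuous_const.sub ((continuous_pow 2).comp continuous_T)
  have hIty : Integrable (fun η : Sph d => u η * (1 - (T η) ^ 2)) (sphMeasure d) :=
    integrable_mul_bdd huI hcont_sq.aestronglyMeasurable hTle
  -- the lifted point on the half great circle
  set i1 : Fin (d + 1) := ⟨1, by omega⟩ with hi1
  have h0i1 : (0 : Fin (d + 1)) ≠ i1 := by
    simp [hi1, Fin.ext_iff]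
  set cl : ℝ → ℝ := fun s => max (-1) (min 1 s) with hcl
  have hcl_cont : Continuous cl := continuous_const.max (continuous_const.min continuous_id)
  have hcl_mem : ∀ s, -1 ≤ cl s ∧ cl s ≤ 1 := by
    intro s
    refine ⟨le_max_left _ _, max_le (by norm_num) (min_le_left _ _)⟩
  have hcl_eq : ∀ s, -1 ≤ s → s ≤ 1 → cl s = s := by
    intro s h1 h2
    rw [hcl]
    simp only
    rw [min_eq_right h2, max_eq_right h1]
  set V : ℝ → Euc (d + 1) := fun s =>
    cl s • EuclideanSpace.single 0 1 + Real.sqrt (1 - cl s ^ 2) • EuclideanSpace.single i1 1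
    with hV
  have hsingle_inner : ⟪(EuclideanSpace.single (0 : Fin (d+1)) (1:ℝ) : Euc (d+1)),
      (EuclideanSpace.single i1 1 : Euc (d+1))⟫ = 0 := by
    rw [EuclideanSpace.inner_single_left]
    simp [EuclideanSpace.single_apply, h0i1]
  have hVnorm : ∀ s, ‖V s‖ = 1 := by
    intro s
    have hn2 : ‖V s‖ ^ 2 = 1 := by
      rw [hV]
      simp only
      rw [@norm_add_sq_real]
      rw [real_inner_smul_left, real_inner_smul_right, hsingle_inner]
      rw [norm_smul, norm_smul, EuclideanSpace.norm_single, EuclideanSpace.norm_single]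
      have h1 : 0 ≤ 1 - cl s ^ 2 := by
        obtain ⟨ha, hb⟩ := hcl_mem s
        nlinarith
      simp only [abs_one, mul_one, mul_zero, Real.norm_eq_abs, sq_abs]
      rw [Real.sq_sqrt h1]
      ring
    nlinarith [norm_nonneg (V s)]
  set pt : ℝ → Sph d := fun s => ⟨V s, by rw [mem_sphere_zero_iff_norm]; exact hVnorm s⟩
    with hpt
  have hTpt : ∀ s, T (pt s) = cl s := by
    intro s
    show (V s) 0 = cl s
    rw [hV]
    simp only
    show cl s • (EuclideanSpace.single (0:Fin (d+1)) (1:ℝ)) 0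
        + Real.sqrt (1 - cl s ^ 2) • (EuclideanSpace.single i1 (1:ℝ)) 0 = cl s
    rw [EuclideanSpace.single_apply, EuclideanSpace.single_apply]
    rw [if_pos rfl, if_neg h0i1]
    simp
  have hupt : ∀ η : Sph d, u η = u (pt (T η)) := by
    intro η
    apply hpol
    rw [inner_npole, inner_npole]
    show T η = T (pt (T η))
    rw [hTpt, hcl_eq _ (neg_le_of_abs_le (abs_T_le_one η)) (le_of_abs_le (abs_T_le_one η))]
  have hptcont : Continuous pt := by
    apply Continuous.subtype_mk
    apply Continuous.add
    · exact hcl_cont.smul continuous_const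
    · exact (Real.continuous_sqrt.comp (continuous_const.sub (hcl_cont.pow 2))).smul
        continuous_const
  -- the strips
  set w : ℕ → ℝ := fun n => (κ / 8) / (n + 1) with hw
  have hw0 : ∀ n : ℕ, 0 < w n := by
    intro n
    apply div_pos (by linarith)
    positivity
  have hw8 : ∀ n : ℕ, w n ≤ κ / 2 / 4 := by
    intro n
    rw [hw]
    simp only
    rw [div_le_iff₀ (by positivity : (0:ℝ) < (n:ℝ) + 1)]
    have h1 : (1:ℝ) ≤ (n:ℝ) + 1 := by
      have : (0:ℝ) ≤ (n:ℝ) := Nat.cast_nonneg n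
      linarith
    nlinarith
  set S : ℕ → Set (Sph d) := fun n => {η : Sph d | |T η - s₀| ≤ w n} with hS
  have hSm : ∀ n, MeasurableSet (S n) := by
    intro n
    apply IsClosed.measurableSet
    exact isClosed_le ((continuous_T.sub continuous_const).abs) continuous_const
  have hScompact : ∀ n, IsCompact (S n) :=
    fun n => (isClosed_le ((continuous_T.sub continuous_const).abs) continuous_const).isCompact
  have hη₀S : ∀ n, η₀ ∈ S n := by
    intro n
    show |T η₀ - s₀| ≤ w n
    rw [hs₀def, sub_self, abs_zero]
    exact (hw0 n).le
  have hSoff : ∀ n, S n ⊆ {ξ : Sph d | ξ ≠ npole d ∧ ξ ≠ spole d} := by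
    intro n η hη
    apply mem_offpoles
    have h1 : |T η - s₀| ≤ w n := hη
    have h2 : |s₀| ≤ 1 - κ := hη₀
    have h3 := hw8 n
    calc |T η| = |s₀ + (T η - s₀)| := by ring_nf
      _ ≤ |s₀| + |T η - s₀| := abs_add_le _ _
      _ ≤ (1 - κ) + κ / 8 := by linarith
      _ < 1 := by linarith
  -- minimum of v on the strip
  set v : Sph d → ℝ := fun η => u η * (1 - (T η) ^ 2) with hv
  have hvcont : ∀ n, ContinuousOn v (S n) := by
    intro n
    apply ContinuousOn.mul (hcont.mono (hSoff n))
    exact hcont_sq.continuousOn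
  have hmin : ∀ n, ∃ ηn ∈ S n, ∀ η ∈ S n, v ηn ≤ v η := by
    intro n
    obtain ⟨ηn, hηn, hmin⟩ := (hScompact n).exists_isMinOn ⟨η₀, hη₀S n⟩ (hvcont n)
    exact ⟨ηn, hηn, fun η hη => hmin hη⟩
  choose ηn hηnS hηnmin using hmin
  -- measure lower bound for the strip
  have hμS : ∀ n, c * w n ≤ (sphMeasure d (S n)).toReal := by
    intro n
    have h1 : |s₀| ≤ 1 - κ / 2 := by
      have : |s₀| ≤ 1 - κ := hη₀
      linarith
    have h2 := hstrip s₀ (w n) h1 (hw0 n) (hw8 n)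
    rw [ENNReal.ofReal_le_iff_le_toReal (measure_ne_top _ _)] at h2
    exact h2
  -- upper bound for the strip integral
  have hup : ∀ n, ∫ η in S n, v η ∂(sphMeasure d) ≤ π * w n * N := by
    intro n
    apply le_of_forall_pos_le_add
    intro δ hδ
    have hπ := Real.pi_pos
    have hεpos : 0 < δ / (π * (N + 1)) := div_pos hδ (by nlinarith)
    have hb := strip_integral_bound hu hnn (s₀ - w n) (s₀ + w n) (by linarith [hw0 n]) hεpos
    have hSeq : S n = {η : Sph d | s₀ - w n ≤ T η ∧ T η ≤ s₀ + w n} := by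
      ext η
      show |T η - s₀| ≤ w n ↔ _
      rw [abs_le]
      constructor
      · rintro ⟨h1, h2⟩; exact ⟨by linarith, by linarith⟩
      · rintro ⟨h1, h2⟩; exact ⟨by linarith, by linarith⟩
    have hhalf : (s₀ + w n - (s₀ - w n)) / 2 = w n := by ring
    rw [hSeq]
    calc ∫ η in {η : Sph d | s₀ - w n ≤ T η ∧ T η ≤ s₀ + w n}, v η ∂(sphMeasure d)
        ≤ π * ((s₀ + w n - (s₀ - w n)) / 2 + δ / (π * (N + 1))) * N := hb
      _ = π * w n * N + π * (δ / (π * (N + 1))) * N := by rw [hhalf]; ring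
      _ ≤ π * w n * N + δ := by
          have heq : π * (δ / (π * (N + 1))) * N = δ * (N / (N + 1)) := by
            field_simp
            skip
          rw [heq]
          have h2 : N / (N + 1) ≤ 1 := by
            rw [div_le_one (by linarith)]
            linarith
          nlinarith
  -- lower bound for the strip integral via the minimum
  have hlow : ∀ n, v (ηn n) * (sphMeasure d (S n)).toReal
      ≤ ∫ η in S n, v η ∂(sphMeasure d) := by
    intro n
    have h1 : ∫ _η in S n, v (ηn n) ∂(sphMeasure d) ≤ ∫ η in S n, v η ∂(sphMeasure d) := by
      apply setIntegral_mono_on (integrableOn_const (measure_ne_top _ _))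
        hIty.integrableOn (hSm n)
      intro η hη
      exact hηnmin n η hη
    rw [setIntegral_const, smul_eq_mul, mul_comm] at h1
    exact h1
  -- pointwise bound at the minimum point
  have hbound : ∀ n, u (ηn n) ≤ (8 / (7 * κ)) * (π / c) * N := by
    intro n
    have hvn0 : 0 ≤ v (ηn n) := mul_nonneg (hnn _) (habsT _)
    have e1 : v (ηn n) * (c * w n) ≤ π * w n * N :=
      calc v (ηn n) * (c * w n) ≤ v (ηn n) * (sphMeasure d (S n)).toReal :=
            mul_le_mul_of_nonneg_left (hμS n) hvn0
        _ ≤ ∫ η in S n, v η ∂(sphMeasure d) := hlow n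
        _ ≤ π * w n * N := hup n
    have e2 : v (ηn n) * c ≤ π * N := by
      have h3 : (v (ηn n) * c) * w n ≤ (π * N) * w n := by nlinarith [e1]
      exact le_of_mul_le_mul_right h3 (hw0 n)
    have hTn : |T (ηn n)| ≤ 1 - 7 * κ / 8 := by
      have h1 : |T (ηn n) - s₀| ≤ w n := hηnS n
      have h3 := hw8 n
      calc |T (ηn n)| = |s₀ + (T (ηn n) - s₀)| := by ring_nf
        _ ≤ |s₀| + |T (ηn n) - s₀| := abs_add_le _ _
        _ ≤ (1 - κ) + κ / 8 := by linarith [hη₀]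
        _ = 1 - 7 * κ / 8 := by ring
    have hsq : 7 * κ / 8 ≤ 1 - (T (ηn n)) ^ 2 := by
      have h1 : (T (ηn n)) ^ 2 ≤ (1 - 7 * κ / 8) ^ 2 := by
        nlinarith [abs_nonneg (T (ηn n)), sq_abs (T (ηn n))]
      nlinarith
    have e3 : u (ηn n) * (7 * κ / 8) ≤ v (ηn n) :=
      mul_le_mul_of_nonneg_left hsq (hnn _)
    rw [show (8 / (7 * κ)) * (π / c) * N = (π * N / c) / (7 * κ / 8) by field_simp]
    rw [le_div_iff₀ (by positivity)]
    have e4 : v (ηn n) ≤ π * N / c := by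
      rw [le_div_iff₀ hc]
      linarith [e2]
    linarith [e3, e4]
  -- pass to the limit n → ∞
  have hwlim : Filter.Tendsto w atTop (nhds 0) := by
    have h3 : w = fun n : ℕ => (κ / 8) * (1 / ((n : ℝ) + 1)) := by
      funext n; rw [hw]; ring
    rw [h3]
    simpa using tendsto_one_div_add_atTop_nhds_zero_nat.const_mul (κ / 8)
  have hTlim : Filter.Tendsto (fun n => T (ηn n)) atTop (nhds s₀) := by
    have h1 : ∀ n, dist (T (ηn n)) s₀ ≤ w n := fun n => by
      rw [Real.dist_eq]; exact hηnS n
    exact tendsto_iff_dist_tendsto_zero.2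
      (squeeze_zero (fun n => dist_nonneg) h1 hwlim)
  have hptη₀ : pt s₀ ∈ {ξ : Sph d | ξ ≠ npole d ∧ ξ ≠ spole d} := by
    apply mem_offpoles
    rw [hTpt, hcl_eq _ (by nlinarith [abs_nonneg s₀, neg_abs_le s₀])
      (by nlinarith [abs_nonneg s₀, le_abs_self s₀])]
    calc |s₀| ≤ 1 - κ := hη₀
      _ < 1 := by linarith
  have hFc : ContinuousAt (fun s : ℝ => u (pt s)) s₀ :=
    ContinuousAt.comp (hcont.continuousAt (isOpen_offpoles.mem_nhds hptη₀))
      hptcont.continuousAt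
  have hulim : Filter.Tendsto (fun n => u (ηn n)) atTop (nhds (u η₀)) := by
    have h1 : (fun n => u (ηn n)) = fun n => u (pt (T (ηn n))) := by
      funext n; exact hupt (ηn n)
    rw [h1]
    have h2 := hFc.tendsto.comp hTlim
    have h3 : u (pt s₀) = u η₀ := (hupt η₀).symm
    rw [h3] at h2
    exact h2
  exact le_of_tendsto hulim (Filter.Eventually.of_forall hbound)

end RLB
namespace RLB
open Real MeasureTheory Filter Topology

lemma measure_univ_pos (hd : 1 ≤ d) : 0 < sphMeasure d (Set.univ : Set (Sph d)) := by
  have h := cap_measure_pos (d := d) hd (r := π / 4) (by positivity) (by linarith [Real.pi_pos])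
  exact h.trans_le (measure_mono (Set.subset_univ _))

lemma measure_singleton_zero (hd : 1 ≤ d) (x : Sph d) : sphMeasure d {x} = 0 := by
  rw [sphMeasure_apply]
  have himg : (Subtype.val '' ({x} : Set (Sph d)) : Set (Euc (d + 1)))
      = {(x : Euc (d + 1))} := by simp
  rw [himg]
  rw [show ((d : ℕ) : ℝ) = (((d : ℕ) : ℝ≥0) : ℝ) by simp]
  apply hausdorffMeasure_of_dimH_lt
  rw [dimH_singleton]
  exact_mod_cast Nat.pos_of_ne_zero (by omega)

lemma compl_gball_pi_null (hd : 1 ≤ d) (ξ : Sph d) :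
    sphMeasure d (gball ξ Real.pi)ᶜ = 0 := by
  have hx : ‖-(ξ : Euc (d + 1))‖ = 1 := by rw [norm_neg, norm_coe]
  set ξ' : Sph d := ⟨-(ξ : Euc (d + 1)), by rw [mem_sphere_zero_iff_norm]; exact hx⟩ with hξ'
  have hsub : (gball ξ Real.pi)ᶜ ⊆ ({ξ'} : Set (Sph d)) := by
    intro η hη
    have h1 : ¬ geodist ξ η < π := hη
    have h2 : geodist ξ η = π := le_antisymm (geodist_le_pi _ _) (not_lt.1 h1)
    have h3 : ⟪(ξ : Euc (d + 1)), (η : Euc (d + 1))⟫ ≤ -1 := Real.arccos_eq_pi.1 h2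
    have h4 : ⟪(ξ : Euc (d + 1)), (η : Euc (d + 1))⟫ = -1 :=
      le_antisymm h3 (neg_one_le_inner _ _)
    have h5 : ‖(η : Euc (d + 1)) + (ξ : Euc (d + 1))‖ ^ 2 = 0 := by
      rw [@norm_add_sq_real, norm_coe, norm_coe, real_inner_comm, h4]
      ring
    have h6 : (η : Euc (d + 1)) = -(ξ : Euc (d + 1)) := by
      have := pow_eq_zero_iff (n := 2) (by norm_num) |>.1 h5
      rw [norm_eq_zero] at this
      linear_combination (norm := module) this
    show η ∈ ({ξ'} : Set (Sph d))
    rw [Set.mem_singleton_iff]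
    ext1
    exact h6
  exact measure_mono_null hsub (measure_singleton_zero hd ξ')

lemma setAverage_gball_pi (hd : 1 ≤ d) (ξ : Sph d) (u : Sph d → ℝ) :
    ⨍ η in gball ξ Real.pi, |u η| ∂(sphMeasure d)
      = (sphMeasure d (Set.univ : Set (Sph d))).toReal⁻¹ * ∫ η, |u η| ∂(sphMeasure d) := by
  have h1 : (sphMeasure d).restrict (gball ξ Real.pi) = sphMeasure d := by
    rw [Measure.restrict_congr_set (ae_eq_univ.2 (compl_gball_pi_null hd ξ)),
      Measure.restrict_univ]
  show ⨍ η, |u η| ∂((sphMeasure d).restrict (gball ξ Real.pi)) = _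
  rw [h1, average_eq, smul_eq_mul, measureReal_def]

lemma setAverage_abs_nonneg {s : Set (Sph d)} {u : Sph d → ℝ} :
    0 ≤ ⨍ η in s, |u η| ∂(sphMeasure d) := by
  rw [setAverage_eq, smul_eq_mul]
  apply mul_nonneg (by positivity)
  exact integral_nonneg (fun η => abs_nonneg _)

lemma setAverage_le_of_bound {s : Set (Sph d)} (hs : MeasurableSet s) {u : Sph d → ℝ}
    (huI : Integrable u (sphMeasure d)) {M : ℝ} (hM0 : 0 ≤ M)
    (hus : ∀ η ∈ s, |u η| ≤ M) :
    ⨍ η in s, |u η| ∂(sphMeasure d) ≤ M := by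
  have h1 : ∫ η in s, |u η| ∂(sphMeasure d) ≤ M * (sphMeasure d s).toReal := by
    calc ∫ η in s, |u η| ∂(sphMeasure d) ≤ ∫ _η in s, M ∂(sphMeasure d) :=
          setIntegral_mono_on huI.abs.integrableOn
            (integrableOn_const (measure_ne_top _ _)) hs hus
      _ = (sphMeasure d s).toReal • M := setIntegral_const M
      _ = M * (sphMeasure d s).toReal := by rw [smul_eq_mul, mul_comm]
  rw [setAverage_eq, smul_eq_mul, measureReal_def]
  rcases eq_or_ne ((sphMeasure d s).toReal) 0 with h0 | h0
  · rw [h0]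
    simp [hM0]
  · have hpos : 0 < (sphMeasure d s).toReal :=
      lt_of_le_of_ne ENNReal.toReal_nonneg (Ne.symm h0)
    calc (sphMeasure d s).toReal⁻¹ * ∫ η in s, |u η| ∂(sphMeasure d)
        ≤ (sphMeasure d s).toReal⁻¹ * (M * (sphMeasure d s).toReal) := by
          apply mul_le_mul_of_nonneg_left h1 (by positivity)
      _ = M := by field_simp

/-- Any ball containing `ξ` with small radius stays in the annulus. -/
lemma ball_T_bound {κ : ℝ} {ζ ξ η : Sph d} {r : ℝ} (hrκ : r ≤ κ / 8)
    (hζξ : geodist ζ ξ ≤ r) (hξ : |T ξ| ≤ 1 - κ) (hη : η ∈ gball ζ r) :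
    |T η| ≤ 1 - κ / 2 := by
  have h1 : |T ζ - T η| ≤ r := (abs_T_sub_le ζ η).trans (le_of_lt hη)
  have h2 : |T ζ - T ξ| ≤ r := (abs_T_sub_le ζ ξ).trans hζξ
  have hr0 : 0 < r := lt_of_le_of_lt (geodist_nonneg ζ η) hη
  have h3 : 0 < κ := by linarith
  calc |T η| = |T ξ + ((T η - T ζ) + (T ζ - T ξ))| := by ring_nf
    _ ≤ |T ξ| + |(T η - T ζ) + (T ζ - T ξ)| := abs_add_le _ _
    _ ≤ |T ξ| + (|T η - T ζ| + |T ζ - T ξ|) := by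
        have := abs_add_le (T η - T ζ) (T ζ - T ξ)
        linarith
    _ ≤ (1 - κ) + (r + r) := by
        rw [abs_sub_comm (T η) (T ζ)]
        linarith
    _ ≤ 1 - κ / 2 := by linarith

/-- BddAbove of the set defining `sphMax`, plus the lower bound by the full-sphere ball. -/
lemma sphMax_bounds (hd : 1 ≤ d) {κ : ℝ} (hκ0 : 0 < κ) (hκ1 : κ ≤ 1) {β : ℝ} (hβ0 : 0 < β)
    {u : Sph d → ℝ} (huI : Integrable u (sphMeasure d)) (hnn : ∀ ξ : Sph d, 0 ≤ u ξ)
    {M : ℝ} (hM0 : 0 ≤ M) (hM : ∀ η : Sph d, |T η| ≤ 1 - κ / 2 → u η ≤ M)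
    {ξ : Sph d} (hξ : |T ξ| ≤ 1 - κ) :
    π ^ β * ((sphMeasure d (Set.univ : Set (Sph d))).toReal⁻¹
        * ∫ η, u η ∂(sphMeasure d)) ≤ sphMax β u ξ := by
  have hπ := Real.pi_pos
  set m₀ : ℝ := (sphMeasure d (gball (npole d) (κ / 8))).toReal with hm₀
  have hm₀pos : 0 < m₀ := by
    rw [hm₀]
    apply ENNReal.toReal_pos _ (measure_ne_top _ _)
    apply ne_of_gt
    apply cap_measure_pos hd (by linarith)
    calc κ / 8 ≤ 1 / 8 := by linarith
      _ ≤ π / 2 := by linarith [Real.pi_gt_three]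
  -- BddAbove
  have hbdd : BddAbove {a | ∃ ζ : Sph d, ∃ r : ℝ, 0 < r ∧ r ≤ Real.pi ∧ geodist ζ ξ ≤ r ∧
      a = r ^ β * ⨍ η in gball ζ r, |u η| ∂(sphMeasure d)} := by
    refine ⟨π ^ β * (M + m₀⁻¹ * ∫ η, |u η| ∂(sphMeasure d)), ?_⟩
    rintro a ⟨ζ, r, hr0, hrπ, hζξ, rfl⟩
    have hrβ : r ^ β ≤ π ^ β := Real.rpow_le_rpow hr0.le hrπ hβ0.le
    have hIabs : 0 ≤ ∫ η, |u η| ∂(sphMeasure d) := integral_nonneg (fun _ => abs_nonneg _)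
    have havg : ⨍ η in gball ζ r, |u η| ∂(sphMeasure d)
        ≤ M + m₀⁻¹ * ∫ η, |u η| ∂(sphMeasure d) := by
      rcases le_or_gt r (κ / 8) with hcase | hcase
      · have h1 : ⨍ η in gball ζ r, |u η| ∂(sphMeasure d) ≤ M := by
          apply setAverage_le_of_bound (measurableSet_gball ζ r) huI hM0
          intro η hη
          rw [abs_of_nonneg (hnn η)]
          exact hM η (ball_T_bound hcase hζξ hξ hη)
        have h2 : 0 ≤ m₀⁻¹ * ∫ η, |u η| ∂(sphMeasure d) := by positivity
        linarith
      · -- big ball: average bounded by total mass over minimal ball measure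
        have hμ : m₀ ≤ (sphMeasure d (gball ζ r)).toReal := by
          rw [hm₀]
          apply ENNReal.toReal_le_toReal (measure_ne_top _ _) (measure_ne_top _ _) |>.2
          rw [measure_gball_eq (npole d) ζ (κ / 8)]
          apply measure_mono
          intro η hη
          exact lt_of_lt_of_le hη hcase.le
        have h3 : ∫ η in gball ζ r, |u η| ∂(sphMeasure d) ≤ ∫ η, |u η| ∂(sphMeasure d) :=
          setIntegral_le_integral huI.abs
            (Filter.Eventually.of_forall (fun η => abs_nonneg _))
        have h4 : ⨍ η in gball ζ r, |u η| ∂(sphMeasure d)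
            ≤ m₀⁻¹ * ∫ η, |u η| ∂(sphMeasure d) := by
          rw [setAverage_eq, smul_eq_mul]
          have h5 : 0 ≤ ∫ η in gball ζ r, |u η| ∂(sphMeasure d) :=
            setIntegral_nonneg (measurableSet_gball ζ r) (fun η _ => abs_nonneg _)
          apply mul_le_mul _ h3 h5 (by positivity)
          apply inv_anti₀ hm₀pos hμ
        have h5 : 0 ≤ M := hM0
        linarith
    have hfin : r ^ β * ⨍ η in gball ζ r, |u η| ∂(sphMeasure d)
        ≤ π ^ β * (M + m₀⁻¹ * ∫ η, |u η| ∂(sphMeasure d)) := by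
      apply mul_le_mul hrβ havg setAverage_abs_nonneg
      positivity
    exact hfin
  -- the element with r = π
  have hmem : π ^ β * ⨍ η in gball ξ Real.pi, |u η| ∂(sphMeasure d)
      ∈ {a | ∃ ζ : Sph d, ∃ r : ℝ, 0 < r ∧ r ≤ Real.pi ∧ geodist ζ ξ ≤ r ∧
        a = r ^ β * ⨍ η in gball ζ r, |u η| ∂(sphMeasure d)} := by
    refine ⟨ξ, Real.pi, hπ, le_rfl, ?_, rfl⟩
    rw [geodist_self]
    exact hπ.le
  have h6 := le_csSup hbdd hmem
  have h7 : ⨍ η in gball ξ Real.pi, |u η| ∂(sphMeasure d)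
      = (sphMeasure d (Set.univ : Set (Sph d))).toReal⁻¹ * ∫ η, u η ∂(sphMeasure d) := by
    rw [setAverage_gball_pi hd]
    congr 1
    apply integral_congr_ae
    filter_upwards with η
    exact abs_of_nonneg (hnn η)
  rw [h7] at h6
  exact h6

end RLB
namespace RLB
open Real MeasureTheory Filter Topology

lemma exists_kappa (K : Set (Sph d)) (h1 : 0 < EMetric.infEdist (npole d) K)
    (h2 : 0 < EMetric.infEdist (spole d) K) :
    ∃ κ : ℝ, 0 < κ ∧ κ ≤ 1 ∧ ∀ ξ ∈ K, |T ξ| ≤ 1 - κ := by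
  have key : ∀ p : Sph d, 0 < EMetric.infEdist p K →
      ∃ ε : ℝ, 0 < ε ∧ ε ≤ 1 ∧ ∀ ξ ∈ K, ε ≤ ‖(p : Euc (d + 1)) - (ξ : Euc (d + 1))‖ := by
    intro p hp
    set t := min (EMetric.infEdist p K) 1 with ht
    have ht0 : 0 < t := lt_min hp (by norm_num)
    have htne : t ≠ ⊤ := ((min_le_right _ _).trans_lt (by norm_num)).ne
    refine ⟨t.toReal, ENNReal.toReal_pos ht0.ne' htne, ?_, ?_⟩
    · calc t.toReal ≤ (1 : ℝ≥0∞).toReal :=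
          ENNReal.toReal_mono (by norm_num) (min_le_right _ _)
        _ = 1 := by simp
    · intro ξ hξ
      have h3 : t ≤ edist p ξ :=
        le_trans (min_le_left _ _) (EMetric.infEdist_le_edist_of_mem hξ)
      rw [edist_dist] at h3
      have h4 : t.toReal ≤ dist p ξ := by
        have h5 := ENNReal.toReal_mono ENNReal.ofReal_ne_top h3
        rwa [ENNReal.toReal_ofReal dist_nonneg] at h5
      rwa [Subtype.dist_eq, dist_eq_norm] at h4
  obtain ⟨ε1, hε10, hε11, hε1K⟩ := key _ h1
  obtain ⟨ε2, hε20, hε21, hε2K⟩ := key _ h2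
  refine ⟨min (ε1 ^ 2 / 2) (ε2 ^ 2 / 2), by positivity, ?_, ?_⟩
  · calc min (ε1 ^ 2 / 2) (ε2 ^ 2 / 2) ≤ ε1 ^ 2 / 2 := min_le_left _ _
      _ ≤ 1 := by nlinarith
  · intro ξ hξ
    have hn := hε1K ξ hξ
    have hs := hε2K ξ hξ
    have e1 : ‖((npole d) : Euc (d + 1)) - (ξ : Euc (d + 1))‖ ^ 2 = 2 - 2 * T ξ := by
      rw [dist_sq (npole d) ξ, real_inner_comm, inner_npole]
      rfl
    have e2 : ‖((spole d) : Euc (d + 1)) - (ξ : Euc (d + 1))‖ ^ 2 = 2 + 2 * T ξ := by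
      rw [dist_sq (spole d) ξ]
      have h5 : ⟪((spole d) : Euc (d + 1)), (ξ : Euc (d + 1))⟫ = -T ξ := by
        rw [show ((spole d : Sph d) : Euc (d + 1)) = -((npole d) : Euc (d + 1)) from rfl]
        rw [inner_neg_left, real_inner_comm, inner_npole]
        rfl
      rw [h5]; ring
    have b1 : T ξ ≤ 1 - ε1 ^ 2 / 2 := by
      nlinarith [norm_nonneg (((npole d) : Euc (d + 1)) - (ξ : Euc (d + 1)))]
    have b2 : -(1 - ε2 ^ 2 / 2) ≤ T ξ := by
      nlinarith [norm_nonneg (((spole d) : Euc (d + 1)) - (ξ : Euc (d + 1)))]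
    rw [abs_le]
    constructor
    · have h6 : min (ε1 ^ 2 / 2) (ε2 ^ 2 / 2) ≤ ε2 ^ 2 / 2 := min_le_right _ _
      linarith
    · have h6 : min (ε1 ^ 2 / 2) (ε2 ^ 2 / 2) ≤ ε1 ^ 2 / 2 := min_le_left _ _
      linarith

end RLB
set_option maxHeartbeats 1000000 in
/-- **Uniform radius lower bound along a convergent sequence.** If `f_j → f` in
`W^{1,1}_pol(𝕊^d)` (all nonnegative, continuous off the poles, `f` not identically zero) and
`𝓚` is compact with `d({𝐞,-𝐞},𝓚) > 0`, then there is `ρ > 0` such that for all large `j`,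
every best ball for `f_j` at every `ξ ∈ 𝓚` has radius `> ρ`. -/
theorem radius_lower_bound_sequence (d : ℕ) (hd : 1 ≤ d) (β : ℝ) (hβ0 : 0 < β) (hβd : β < d)
    (f : Sph d → ℝ) (g : Sph d → Euc (d + 1))
    (fj : ℕ → Sph d → ℝ) (gj : ℕ → Sph d → Euc (d + 1))
    (hf : MemW11 f g) (hfpol : IsPolar f) (hnn : ∀ ξ, 0 ≤ f ξ)
    (hne : ¬ ∀ᵐ ξ ∂(sphMeasure d), f ξ = 0)
    (hcont : ContinuousOn f {ξ : Sph d | ξ ≠ npole d ∧ ξ ≠ spole d})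
    (hfj : ∀ j, MemW11 (fj j) (gj j)) (hfjpol : ∀ j, IsPolar (fj j))
    (hfjnn : ∀ j ξ, 0 ≤ fj j ξ)
    (hfjcont : ∀ j, ContinuousOn (fj j) {ξ : Sph d | ξ ≠ npole d ∧ ξ ≠ spole d})
    (hconv : W11Tendsto fj gj f g)
    (K : Set (Sph d)) (hK : IsCompact K)
    (hdK : 0 < EMetric.infEdist (npole d) K ∧ 0 < EMetric.infEdist (spole d) K) :
    ∃ ρ : ℝ, 0 < ρ ∧ ∀ᶠ j in atTop, ∀ ξ ∈ K, ∀ (ζ : Sph d) (r : ℝ),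
      IsBestBall β (fj j) ξ ζ r → ρ < r := by
  classical
  have hπ := Real.pi_pos
  -- the compact set sits in an annulus |T| ≤ 1 - κ
  obtain ⟨κ, hκ0, hκ1, hκK⟩ := RLB.exists_kappa K hdK.1 hdK.2
  -- total masses and基本 limits
  set I := ∫ η, f η ∂(sphMeasure d) with hIdef
  set Ig := ∫ η, ‖g η‖ ∂(sphMeasure d) with hIgdef
  have hIg0 : 0 ≤ Ig := integral_nonneg (fun _ => norm_nonneg _)
  have hI0 : 0 < I := by
    rcases lt_or_eq_of_le (integral_nonneg hnn : 0 ≤ I) with h | h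
    · exact h
    · exfalso
      apply hne
      have h2 := (integral_eq_zero_iff_of_nonneg hnn hf.1).1 h.symm
      filter_upwards [h2] with η hη using hη
  -- measure of the sphere
  set V := (sphMeasure d (Set.univ : Set (Sph d))).toReal with hVdef
  have hV0 : 0 < V :=
    ENNReal.toReal_pos (RLB.measure_univ_pos hd).ne' (measure_ne_top _ _)
  -- the lower-bound constant
  set c₀ := Real.pi ^ β * (V⁻¹ * (I / 2)) with hc₀def
  have hc₀ : 0 < c₀ := by
    apply mul_pos (Real.rpow_pos_of_pos hπ β)
    positivity
  -- the sup-bound constant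
  obtain ⟨C, hC0, hCb⟩ := RLB.sup_bound hd (κ := κ / 2) (by linarith) (by linarith)
  set M := C * ((d : ℝ) * (I + 1) + (Ig + 1)) with hMdef
  have hM0 : 0 ≤ M := by
    apply mul_nonneg hC0.le
    have : (0:ℝ) ≤ (d : ℝ) := Nat.cast_nonneg d
    nlinarith
  -- the radius
  set ρ := min (κ / 8) ((c₀ / (M + 1)) ^ β⁻¹) with hρdef
  have hρ0 : 0 < ρ := by
    apply lt_min (by linarith)
    apply Real.rpow_pos_of_pos
    positivity
  have hρβM : ρ ^ β * M < c₀ := by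
    have h1 : ρ ^ β ≤ c₀ / (M + 1) := by
      calc ρ ^ β ≤ ((c₀ / (M + 1)) ^ β⁻¹) ^ β :=
            Real.rpow_le_rpow hρ0.le (min_le_right _ _) hβ0.le
        _ = c₀ / (M + 1) := by
            rw [← Real.rpow_mul (by positivity : (0:ℝ) ≤ c₀ / (M + 1)),
              inv_mul_cancel₀ hβ0.ne', Real.rpow_one]
    calc ρ ^ β * M ≤ (c₀ / (M + 1)) * M := by
          apply mul_le_mul_of_nonneg_right h1 hM0
      _ < c₀ := by
          rw [div_mul_eq_mul_div, div_lt_iff₀ (by linarith)]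
          nlinarith
  -- integral comparison along the sequence
  have hIdiff : ∀ j, |(∫ η, fj j η ∂(sphMeasure d)) - I|
      ≤ ∫ η, |fj j η - f η| ∂(sphMeasure d) := by
    intro j
    rw [hIdef, ← integral_sub (hfj j).1 hf.1]
    exact RLB.abs_integral_le _
  have hgdiff : ∀ j, |(∫ η, ‖gj j η‖ ∂(sphMeasure d)) - Ig|
      ≤ ∫ η, ‖gj j η - g η‖ ∂(sphMeasure d) := by
    intro j
    rw [hIgdef, ← integral_sub (hfj j).2.1.norm hf.2.1.norm]
    refine le_trans (RLB.abs_integral_le _) ?_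
    apply integral_mono ((hfj j).2.1.norm.sub hf.2.1.norm).abs
      (((hfj j).2.1.sub hf.2.1).norm)
    intro η
    exact abs_norm_sub_norm_le _ _
  have hconv' : Tendsto (fun j => (∫ ξ, |fj j ξ - f ξ| ∂(sphMeasure d)) +
      ∫ ξ, ‖gj j ξ - g ξ‖ ∂(sphMeasure d)) atTop (nhds 0) := hconv
  have hsmall : ∀ ε : ℝ, 0 < ε → ∀ᶠ j in atTop,
      (∫ ξ, |fj j ξ - f ξ| ∂(sphMeasure d)) < ε ∧
      (∫ ξ, ‖gj j ξ - g ξ‖ ∂(sphMeasure d)) < ε := by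
    intro ε hε
    filter_upwards [hconv'.eventually_lt_const hε] with j hj
    have h1 : 0 ≤ ∫ ξ, |fj j ξ - f ξ| ∂(sphMeasure d) :=
      integral_nonneg (fun _ => abs_nonneg _)
    have h2 : 0 ≤ ∫ ξ, ‖gj j ξ - g ξ‖ ∂(sphMeasure d) :=
      integral_nonneg (fun _ => norm_nonneg _)
    constructor <;> linarith
  -- the eventual statement
  refine ⟨ρ, hρ0, ?_⟩
  filter_upwards [hsmall (I / 2) (by positivity), hsmall 1 one_pos] with j hj1 hj2
  intro ξ hξK ζ r hbest
  obtain ⟨hr0, hrπ, hζξ, heq⟩ := hbest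
  -- bounds on the integrals of f_j
  have hIfj_lb : I / 2 ≤ ∫ η, fj j η ∂(sphMeasure d) := by
    have h := (abs_le.1 (hIdiff j)).1
    linarith [hj1.1]
  have hIfj_ub : (∫ η, fj j η ∂(sphMeasure d)) ≤ I + 1 := by
    have h := (abs_le.1 (hIdiff j)).2
    linarith [hj2.1]
  have hIgj_ub : (∫ η, ‖gj j η‖ ∂(sphMeasure d)) ≤ Ig + 1 := by
    have h := (abs_le.1 (hgdiff j)).2
    linarith [hj2.2]
  -- uniform sup bound for fj j on the annulus
  have hMj : ∀ η : Sph d, |RLB.T η| ≤ 1 - κ / 2 → fj j η ≤ M := by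
    intro η hη
    calc fj j η ≤ C * ((d : ℝ) * (∫ η, fj j η ∂(sphMeasure d))
          + ∫ η, ‖gj j η‖ ∂(sphMeasure d)) :=
          hCb (fj j) (gj j) (hfj j) (hfjnn j) (hfjpol j) (hfjcont j) η hη
      _ ≤ M := by
          rw [hMdef]
          apply mul_le_mul_of_nonneg_left _ hC0.le
          have h1 : (d : ℝ) * (∫ η, fj j η ∂(sphMeasure d)) ≤ (d : ℝ) * (I + 1) :=
            mul_le_mul_of_nonneg_left hIfj_ub (Nat.cast_nonneg d)
          linarith
  -- lower bound on the maximal function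
  have hmax_lb : c₀ ≤ sphMax β (fj j) ξ := by
    have h := RLB.sphMax_bounds hd hκ0 hκ1 hβ0 (hfj j).1 (hfjnn j) hM0 hMj (hκK ξ hξK)
    refine le_trans ?_ h
    rw [hc₀def]
    apply mul_le_mul_of_nonneg_left _ (Real.rpow_nonneg hπ.le β)
    rw [← hVdef]
    apply mul_le_mul_of_nonneg_left hIfj_lb
    positivity
  -- the contradiction argument
  by_contra hcon
  push_neg at hcon
  rcases eq_or_lt_of_le hr0 with hr00 | hr0pos
  · rw [← hr00, Real.zero_rpow hβ0.ne', zero_mul] at heq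
    linarith
  · have havg : ⨍ η in gball ζ r, |fj j η| ∂(sphMeasure d) ≤ M := by
      apply RLB.setAverage_le_of_bound (RLB.measurableSet_gball ζ r) (hfj j).1 hM0
      intro η hη
      rw [abs_of_nonneg (hfjnn j η)]
      exact hMj η (RLB.ball_T_bound (le_trans hcon (min_le_left _ _)) hζξ (hκK ξ hξK) hη)
    have hfinal : sphMax β (fj j) ξ ≤ ρ ^ β * M := by
      rw [heq]
      exact mul_le_mul (Real.rpow_le_rpow hr0 hcon hβ0.le) havg
        RLB.setAverage_abs_nonneg (Real.rpow_nonneg hρ0.le β)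
    linarith
end
end
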